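/- arXiv:1202.6556 — 4 statements merged into one kernel-verified Lean document; each statement's English description precedes it below -/
import Mathlib

section
/- Let G be a graph, C a longest cycle in G, and P = x→y a longest path in G∖C of length p̄ ≥ 1. If |N_C(x)| ≥ 2, |N_C(y)| ≥ 2, N_C(x) ≠ N_C(y), and p̄ = 1, then |C| ≥ 3δ + max{σ₁, σ₂} − 1 ≥ 3δ, where σ₁ = |N_C(x)∖N_C(y)|, σ₂ = |N_C(y)∖N_C(x)| and δ is the minimum degree of G. -/
open SimpleGraph

namespace ToughPaper

variable {V : Type*}

/-- Number of connected components of the subgraph induced on the complement of `S`. -/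
noncomputable def numComp (G : SimpleGraph V) (S : Set V) : ℕ :=
  Nat.card (G.induce Sᶜ).ConnectedComponent

/-- The toughness of `G` is greater than 1: `|S| > s(G∖S)` for every cutset `S`. -/
def ToughGtOne [Fintype V] (G : SimpleGraph V) : Prop :=
  ∀ S : Finset V, 1 < numComp G ↑S → numComp G ↑S < S.card

/-- The toughness of `G` is at most 1: some cutset `S` has `|S| ≤ s(G∖S)`. -/
def ToughLeOne [Fintype V] (G : SimpleGraph V) : Prop :=
  ∃ S : Finset V, 1 < numComp G ↑S ∧ S.card ≤ numComp G ↑S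

/-- `G` is `k`-connected: more than `k` vertices and no cutset of size `< k`. -/
def KConnected [Fintype V] (k : ℕ) (G : SimpleGraph V) : Prop :=
  k < Fintype.card V ∧ ∀ S : Finset V, S.card < k → (G.induce (↑S : Set V)ᶜ).Connected

/-- The (vertex) connectivity `κ(G)`. -/
noncomputable def conn [Fintype V] (G : SimpleGraph V) : ℕ :=
  sSup {k | KConnected k G}

/-- `C` is a longest cycle in `G`. -/
def IsLongestCycle (G : SimpleGraph V) {v : V} (C : G.Walk v v) : Prop :=
  C.IsCycle ∧ ∀ (u : V) (D : G.Walk u u), D.IsCycle → D.length ≤ C.length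

/-- `P` is a longest path among paths of `G` avoiding the vertex list `W`
(i.e. a longest path of `G ∖ W`). -/
def IsLongestPathOff (G : SimpleGraph V) (W : List V) {x y : V} (P : G.Walk x y) : Prop :=
  P.IsPath ∧ (∀ u ∈ P.support, u ∉ W) ∧
  ∀ (a b : V) (Q : G.Walk a b), Q.IsPath → (∀ u ∈ Q.support, u ∉ W) → Q.length ≤ P.length

/-- The neighbors of `x` lying on the vertex list `W` (e.g. `N_C(x)` for `W = C.support`). -/
def nbrsOn (G : SimpleGraph V) (W : List V) (x : V) : Set V :=
  {u | u ∈ W ∧ G.Adj x u}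

/-- The number of edges of the oriented arc of the closed walk `C` from `a` to `b`. -/
noncomputable def arcLen [DecidableEq V] {G : SimpleGraph V} {v : V}
    (C : G.Walk v v) (a b : V) : ℕ :=
  if h : ∃ (ha : a ∈ C.support), b ∈ (C.rotate a ha).support then
    ((C.rotate a h.choose).takeUntil b h.choose_spec).length
  else 0

/-- The vertices of the oriented arc of `C` from `a` to `b`. -/
noncomputable def arcSupport [DecidableEq V] {G : SimpleGraph V} {v : V}
    (C : G.Walk v v) (a b : V) : List V :=
  if h : ∃ (ha : a ∈ C.support), b ∈ (C.rotate a ha).support then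
    ((C.rotate a h.choose).takeUntil b h.choose_spec).support
  else []

/-- The successor of `a` on the oriented closed walk `C`. -/
noncomputable def cycSucc [DecidableEq V] {G : SimpleGraph V} {v : V}
    (C : G.Walk v v) (a : V) : V :=
  if h : a ∈ C.support then (C.rotate a h).getVert 1 else a

/-- The predecessor of `a` on the oriented closed walk `C`. -/
noncomputable def cycPred [DecidableEq V] {G : SimpleGraph V} {v : V}
    (C : G.Walk v v) (a : V) : V :=
  if h : a ∈ C.support then (C.rotate a h).getVert ((C.rotate a h).length - 1) else a

/-- `a` and `b` are consecutive elements of `N` on `C`; the arc `a→b` is then an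
elementary segment created by `N`. -/
def ConsecOnC [DecidableEq V] {G : SimpleGraph V} {v : V}
    (C : G.Walk v v) (N : Set V) (a b : V) : Prop :=
  a ∈ N ∧ b ∈ N ∧ a ≠ b ∧ ∀ w ∈ arcSupport C a b, w ≠ a → w ≠ b → w ∉ N

/-- `u` is an interior vertex of the arc `a→b` of `C`. -/
def InteriorArc [DecidableEq V] {G : SimpleGraph V} {v : V}
    (C : G.Walk v v) (a b : V) (u : V) : Prop :=
  u ∈ arcSupport C a b ∧ u ≠ a ∧ u ≠ b

/-- `L` is an intermediate path between the elementary segments `a₁→b₁` and `a₂→b₂`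
(created by `N` on `C`), relative to the path with vertex list `Psupp`. -/
def IsInterPath [DecidableEq V] (G : SimpleGraph V) {v z w : V} (C : G.Walk v v)
    (Psupp : List V) (N : Set V) (a₁ b₁ a₂ b₂ : V) (L : G.Walk z w) : Prop :=
  ConsecOnC C N a₁ b₁ ∧ ConsecOnC C N a₂ b₂ ∧ a₁ ≠ a₂ ∧
  L.IsPath ∧ 0 < L.length ∧ InteriorArc C a₁ b₁ z ∧ InteriorArc C a₂ b₂ w ∧
  ∀ u ∈ L.support, (u ∈ C.support ∨ u ∈ Psupp) → u = z ∨ u = w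

/-- Vertex type of the Petersen graph: 2-element subsets of a 5-element set. -/
def PetersenV := {s : Finset (Fin 5) // s.card = 2}

instance : Fintype PetersenV := inferInstanceAs (Fintype {s : Finset (Fin 5) // s.card = 2})
instance : DecidableEq PetersenV := inferInstanceAs (DecidableEq {s : Finset (Fin 5) // s.card = 2})

/-- The Petersen graph as the Kneser graph `K(5,2)`. -/
def petersen : SimpleGraph PetersenV where
  Adj a b := Disjoint a.1 b.1 ∧ a ≠ b
  symm := ⟨fun a b h => ⟨h.1.symm, h.2.symm⟩⟩
  loopless := ⟨fun a h => h.2 rfl⟩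

instance : DecidableRel petersen.Adj :=
  fun a b => inferInstanceAs (Decidable (Disjoint a.1 b.1 ∧ a ≠ b))

end ToughPaper

/-!
Index the longest cycle `C` by `ZMod |C|`. Since `x y` is an edge off `C` and `C` is longest,
no two consecutive vertices of `C` lie in `N = N_C(x) ∪ N_C(y)`, and no vertex of `N_C(x)` is
two steps before one of `N_C(y)` or vice versa: otherwise an ear through `x` and/or `y` would
lengthen `C`. Hence `N`, its successors and its second successors outside `N` are disjoint, so
`|C| ≥ 3|N| - #{k ∈ N | k + 2 ∈ N}`, and such short gaps join two vertices of the same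
`N_C(x) ∖ N_C(y)` or `N_C(y) ∖ N_C(x)`, each of which also has a long gap. On the other side,
maximality of the path `x y` in `G ∖ C` gives `N(x) ⊆ N_C(x) ∪ {y}`, so
`δ ≤ min(|N_C(x)|, |N_C(y)|) + 1`.
-/

open Finset

namespace ZMod

variable {L : ℕ}

theorem mem_map_addRight {S : Finset (ZMod L)} {c k : ZMod L} :
    k ∈ S.map (Equiv.addRight c).toEmbedding ↔ k - c ∈ S := by
  simp [sub_eq_add_neg]

variable [NeZero L]

theorem eq_univ_of_forall_add_one_mem {S : Finset (ZMod L)} (hS : S.Nonempty)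
    (h : ∀ k ∈ S, k + 1 ∈ S) : S = univ := by
  obtain ⟨a, ha⟩ := hS
  have hmem : ∀ n : ℕ, a + n ∈ S := by
    intro n
    induction n with
    | zero => simpa using ha
    | succ n ih => simpa [add_assoc] using h _ ih
  refine eq_univ_of_forall fun z => ?_
  simpa using hmem (z - a).val

theorem three_mul_card_le_add_card_filter {S : Finset (ZMod L)} (hS : ∀ k ∈ S, k + 1 ∉ S) :
    3 * #S ≤ L + #{k ∈ S | k + 2 ∈ S} := by
  -- `S`, `S + 1` and `(S + 2) \ S` are pairwise disjoint.
  set S₁ := S.map (Equiv.addRight 1).toEmbedding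
  set S₂ := S.map (Equiv.addRight 2).toEmbedding
  have hS₂ : S₂ ∩ S = {k ∈ S | k + 2 ∈ S}.map (Equiv.addRight 2).toEmbedding := by
    ext m
    simp only [S₂, mem_inter, mem_map_addRight, mem_filter, sub_add_cancel]
  have hdisj₁ : Disjoint S S₁ := by
    simp only [S₁, Finset.disjoint_left, mem_map_addRight]
    intro k hk hk'
    exact hS _ hk' (by simpa using hk)
  have hdisj₂ : Disjoint (S ∪ S₁) (S₂ \ S) := by
    simp only [S₁, S₂, Finset.disjoint_left, mem_union, mem_sdiff, mem_map_addRight, not_and,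
      not_not]
    rintro k (hk | hk) hk'
    · exact hk
    · have := hS _ hk'
      rw [show k - 2 + 1 = k - 1 by ring] at this
      exact absurd hk this
  have hcard := card_le_univ (S ∪ S₁ ∪ (S₂ \ S))
  rw [card_union_of_disjoint hdisj₂, card_union_of_disjoint hdisj₁, ZMod.card, card_sdiff,
    inter_comm, hS₂, card_map, card_map, card_map] at hcard
  have := card_filter_le S (· + 2 ∈ S)
  omega

theorem card_filter_add_two_mem_le {D : Finset (ZMod L)} {b : ZMod L} (hb : b ∉ D)
    (hb' : b - 1 ∉ D) : #{k ∈ D | k + 2 ∈ D} ≤ #D - 1 := by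
  -- For `D = ∅` the truncated `#D - 1` is `0`, as needed.
  rcases D.eq_empty_or_nonempty with rfl | hD
  · simp
  suffices {k ∈ D | k + 2 ∈ D} ≠ D by
    have := card_lt_card ((filter_subset _ D).ssubset_of_ne this)
    omega
  intro hfix
  have hclosed : ∀ k ∈ D ∪ D.map (Equiv.addRight 1).toEmbedding,
      k + 1 ∈ D ∪ D.map (Equiv.addRight 1).toEmbedding := by
    simp only [mem_union, mem_map_addRight, add_sub_cancel_right]
    rintro k (hk | hk)
    · exact Or.inr hk
    · have := (mem_filter.1 (hfix.symm ▸ hk)).2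
      exact Or.inl (by rwa [show k - 1 + 2 = k + 1 by ring] at this)
  have hb_mem := (eq_univ_of_forall_add_one_mem (hD.mono subset_union_left) hclosed).symm ▸
    mem_univ b
  simp only [mem_union, mem_map_addRight] at hb_mem
  tauto

theorem three_mul_min_card_add_max_card_sdiff_le {A B : Finset (ZMod L)} (hA : A.Nonempty)
    (hB : B.Nonempty) (hAB : A ≠ B) (h₁ : ∀ k ∈ A ∪ B, k + 1 ∉ A ∪ B)
    (h₂ : ∀ k ∈ A, k + 2 ∉ B) (h₂' : ∀ k ∈ B, k + 2 ∉ A) :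
    3 * (min #A #B + 1) + max #(A \ B) #(B \ A) - 1 ≤ L ∧ 3 * (min #A #B + 1) ≤ L := by
  have hshort : {k ∈ A ∪ B | k + 2 ∈ A ∪ B} ⊆
      {k ∈ A \ B | k + 2 ∈ A \ B} ∪ {k ∈ B \ A | k + 2 ∈ B \ A} := by
    intro k
    simp only [mem_filter, mem_union, mem_sdiff]
    have := h₂ k
    have := h₂' k
    tauto
  have hshift {b : ZMod L} (hb : b ∈ A ∪ B) (D : Finset (ZMod L)) (hD : D ⊆ A ∪ B) :
      b - 1 ∉ D := fun h => h₁ _ (hD h) (by rwa [sub_add_cancel])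
  obtain ⟨a, ha⟩ := hA
  obtain ⟨b, hb⟩ := hB
  have hσ₁ := card_filter_add_two_mem_le (D := A \ B) (by simp [hb])
    (hshift (mem_union_right A hb) _ (sdiff_subset.trans subset_union_left))
  have hσ₂ := card_filter_add_two_mem_le (D := B \ A) (by simp [ha])
    (hshift (mem_union_left B ha) _ (sdiff_subset.trans subset_union_right))
  have hσ : 0 < #(A \ B) + #(B \ A) := by
    by_contra h
    exact hAB (Subset.antisymm (sdiff_eq_empty_iff_subset.1 (card_eq_zero.1 (by omega)))
      (sdiff_eq_empty_iff_subset.1 (card_eq_zero.1 (by omega))))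
  have := three_mul_card_le_add_card_filter h₁
  have := (card_le_card hshort).trans (card_union_le _ _)
  have := card_union_add_card_inter A B
  have := card_sdiff_add_card_inter A B
  have := inter_comm A B ▸ card_sdiff_add_card_inter B A
  omega

end ZMod

namespace SimpleGraph.Walk

variable {V : Type*} {G : SimpleGraph V} {u v : V}

theorem getVert_rotate [DecidableEq V] {c : G.Walk v v} (h : u ∈ c.support)
    (hu : c.support.idxOf u < c.length) {j : ℕ} (hj : j ≤ c.length) :
    (c.rotate u h).getVert j = c.getVert ((c.support.idxOf u + j) % c.length) := by
  rw [rotate, getVert_append, dropUntil_eq_drop, takeUntil_eq_take]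
  simp only [getVert_copy, drop_getVert, take_getVert, length_copy, drop_length]
  split_ifs with hlt
  · rw [Nat.mod_eq_of_lt (by omega)]
  · rw [Nat.mod_eq_sub_mod (by omega), Nat.mod_eq_of_lt (by omega)]
    congr 1
    omega

theorem IsCycle.idxOf_getVert [DecidableEq V] {c : G.Walk v v} (hc : c.IsCycle) {n : ℕ}
    (hn : n < c.length) : c.support.idxOf (c.getVert n) = n := by
  have hmem := c.getVert_mem_support n
  rcases le_or_gt n (c.support.idxOf (c.getVert n)) with hle | hlt
  · rw [← length_takeUntil _ hmem] at hle ⊢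
    exact ((getVert_le_length_takeUntil_eq_iff hmem hle).1 rfl).symm
  · exact hc.getVert_injOn' (by simp; omega) (by simp; omega) (c.getVert_support_idxOf hmem)

def getVertZMod (c : G.Walk v v) (k : ZMod c.length) : V :=
  c.getVert k.val

theorem IsCycle.neZero_length {c : G.Walk v v} (hc : c.IsCycle) : NeZero c.length :=
  ⟨by have := hc.three_le_length; omega⟩

theorem IsCycle.injective_getVertZMod {c : G.Walk v v} (hc : c.IsCycle) :
    Function.Injective c.getVertZMod := by
  have := hc.neZero_length
  intro j k h
  exact ZMod.val_injective _ <|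
    hc.getVert_injOn' (by simp; have := j.val_lt; omega) (by simp; have := k.val_lt; omega) h

theorem IsCycle.range_getVertZMod {c : G.Walk v v} (hc : c.IsCycle) :
    Set.range c.getVertZMod = {w | w ∈ c.support} := by
  have := hc.neZero_length
  ext w
  refine ⟨by rintro ⟨k, rfl⟩; exact c.getVert_mem_support _, fun hw => ?_⟩
  obtain ⟨n, rfl, hn⟩ := mem_support_iff_exists_getVert.1 hw
  refine ⟨n, ?_⟩
  rcases hn.lt_or_eq with hlt | rfl
  · simp [getVertZMod, ZMod.val_natCast, Nat.mod_eq_of_lt hlt]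
  · simp [getVertZMod]

theorem IsCycle.getVert_rotate_getVertZMod [DecidableEq V] {c : G.Walk v v} (hc : c.IsCycle)
    (k : ZMod c.length) {j : ℕ} (hj : j ≤ c.length) :
    (c.rotate _ (c.getVert_mem_support k.val)).getVert j = c.getVertZMod (k + j) := by
  have := hc.neZero_length
  rw [getVert_rotate _ (by rw [hc.idxOf_getVert k.val_lt]; exact k.val_lt) hj,
    hc.idxOf_getVert k.val_lt]
  simp [getVertZMod, ZMod.val_add, ZMod.val_natCast]

end SimpleGraph.Walk

namespace ToughPaper

open Walk

variable {V : Type*} {G : SimpleGraph V}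

theorem IsLongestCycle.rotate [DecidableEq V] {u v : V} {C : G.Walk v v}
    (hC : IsLongestCycle G C) (h : u ∈ C.support) : IsLongestCycle G (C.rotate u h) :=
  ⟨hC.1.rotate h, by simpa using hC.2⟩

theorem IsLongestCycle.add_two_le_of_adj {v a b : V} {C : G.Walk v v} (hC : IsLongestCycle G C)
    {j : ℕ} (hj₀ : 0 < j) (hjC : j < C.length) {Q : G.Walk a b} (hQ : Q.IsPath)
    (hQC : ∀ w ∈ Q.support, w ∉ C.support) (ha : G.Adj v a) (hb : G.Adj b (C.getVert j)) :
    Q.length + 2 ≤ j := by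
  -- `C.drop j` closes the ear `v → a ⇝ b → C.getVert j` to a cycle of length
  -- `|C| - j + |Q| + 2`.
  set D := C.drop j
  have hDC : ∀ w ∈ D.support, w ∈ C.support := by
    simp only [D, drop_support_eq_support_drop_min]
    exact fun w hw => List.mem_of_mem_drop hw
  have hpath : (D.append (cons ha Q)).IsPath := by
    rw [isPath_def, support_append, support_cons, List.tail_cons, List.nodup_append]
    exact ⟨(hC.1.isPath_drop hj₀).support_nodup, hQ.support_nodup,
      fun w hw w' hw' hww' => hQC w' hw' (hww' ▸ hDC w hw)⟩
  have hcycle : (cons hb (D.append (cons ha Q))).IsCycle := by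
    rw [cons_isCycle_iff]
    refine ⟨hpath, fun he => ?_⟩
    rw [edges_append, edges_cons, List.mem_append, List.mem_cons] at he
    rcases he with he | he | he
    · exact hQC b Q.end_mem_support (hDC _ (D.fst_mem_support_of_mem_edges he))
    · rcases Sym2.eq_iff.1 he with ⟨rfl, -⟩ | ⟨-, hv⟩
      · exact hQC _ Q.end_mem_support C.start_mem_support
      · have := (hC.1.getVert_endpoint_iff hjC.le).1 hv
        omega
    · exact hQC _ (Q.snd_mem_support_of_mem_edges he) (C.getVert_mem_support j)
  have := hC.2 _ _ hcycle
  simp only [D, length_cons, length_append, drop_length] at this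
  omega

theorem IsLongestCycle.add_two_le_of_adj_getVertZMod [DecidableEq V] {v a b : V}
    {C : G.Walk v v} (hC : IsLongestCycle G C) (k : ZMod C.length) {j : ℕ} (hj₀ : 0 < j)
    (hjC : j < C.length) {Q : G.Walk a b} (hQ : Q.IsPath)
    (hQC : ∀ w ∈ Q.support, w ∉ C.support) (ha : G.Adj (C.getVertZMod k) a)
    (hb : G.Adj b (C.getVertZMod (k + j))) :
    Q.length + 2 ≤ j := by
  refine (hC.rotate (C.getVert_mem_support k.val)).add_two_le_of_adj hj₀ (by simpa using hjC) hQ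
    (by simpa using hQC) ha ?_
  rwa [hC.1.getVert_rotate_getVertZMod k hjC.le]

theorem IsLongestCycle.not_adj_getVertZMod_add_one [DecidableEq V] {v z : V}
    {C : G.Walk v v} (hC : IsLongestCycle G C) (hz : z ∉ C.support) (k : ZMod C.length) :
    ¬ (G.Adj z (C.getVertZMod k) ∧ G.Adj z (C.getVertZMod (k + 1))) := by
  rintro ⟨h, h'⟩
  have := hC.add_two_le_of_adj_getVertZMod k (j := 1) one_pos
    (by have := hC.1.three_le_length; omega) (IsPath.nil (u := z)) (by simpa using hz) h.symm
    (by simpa using h')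
  simp at this

theorem IsLongestCycle.not_adj_getVertZMod_of_adj [DecidableEq V] {v x y : V}
    {C : G.Walk v v} (hC : IsLongestCycle G C) (hxy : G.Adj x y) (hx : x ∉ C.support)
    (hy : y ∉ C.support) (k : ZMod C.length) {j : ℕ} (hj₀ : 0 < j) (hj : j ≤ 2) :
    ¬ (G.Adj x (C.getVertZMod k) ∧ G.Adj y (C.getVertZMod (k + j))) := by
  rintro ⟨h, h'⟩
  have := hC.add_two_le_of_adj_getVertZMod k hj₀ (by have := hC.1.three_le_length; omega)
    (IsPath.of_adj hxy) (by simp [hx, hy]) h.symm h'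
  simp only [length_cons, length_nil] at this
  omega

theorem IsLongestCycle.three_mul_min_ncard_nbrsOn_add_max_le [DecidableEq V] {v x y : V}
    {C : G.Walk v v} (hC : IsLongestCycle G C) (hxy : G.Adj x y) (hx : x ∉ C.support)
    (hy : y ∉ C.support) (hxC : (nbrsOn G C.support x).Nonempty)
    (hyC : (nbrsOn G C.support y).Nonempty)
    (hne : nbrsOn G C.support x ≠ nbrsOn G C.support y) :
    3 * (min (nbrsOn G C.support x).ncard (nbrsOn G C.support y).ncard + 1) +
      max (nbrsOn G C.support x \ nbrsOn G C.support y).ncard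
        (nbrsOn G C.support y \ nbrsOn G C.support x).ncard - 1 ≤ C.length ∧
    3 * (min (nbrsOn G C.support x).ncard (nbrsOn G C.support y).ncard + 1) ≤ C.length := by
  classical
  have := hC.1.neZero_length
  set A := nbrsOn G C.support x
  set B := nbrsOn G C.support y
  have hrange := hC.1.range_getVertZMod
  have hAC : A ⊆ Set.range C.getVertZMod := hrange ▸ fun w hw => hw.1
  have hBC : B ⊆ Set.range C.getVertZMod := hrange ▸ fun w hw => hw.1
  have hcard {S : Set V} (hS : S ⊆ Set.range C.getVertZMod) :
      S.ncard = #(C.getVertZMod ⁻¹' S).toFinset := by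
    rw [← Set.ncard_preimage_of_injective_subset_range hC.1.injective_getVertZMod hS,
      Set.ncard_eq_toFinset_card']
  rw [hcard hAC, hcard hBC, hcard (Set.sdiff_subset.trans hAC),
    hcard (Set.sdiff_subset.trans hBC), Set.preimage_sdiff, Set.preimage_sdiff,
    Set.toFinset_sdiff, Set.toFinset_sdiff]
  apply ZMod.three_mul_min_card_add_max_card_sdiff_le
  · simpa using (Set.image_preimage_eq_of_subset hAC ▸ hxC).of_image
  · simpa using (Set.image_preimage_eq_of_subset hBC ▸ hyC).of_image
  · intro h
    apply hne
    rw [← Set.image_preimage_eq_of_subset hAC, ← Set.image_preimage_eq_of_subset hBC,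
      Set.toFinset_inj.1 h]
  all_goals simp only [mem_union, Set.mem_toFinset, Set.mem_preimage, A, B, nbrsOn,
    Set.mem_ofPred_eq]
  · rintro k (⟨-, hk⟩ | ⟨-, hk⟩) (⟨-, hk'⟩ | ⟨-, hk'⟩)
    · exact hC.not_adj_getVertZMod_add_one hx k ⟨hk, hk'⟩
    · exact hC.not_adj_getVertZMod_of_adj hxy hx hy k one_pos one_le_two
        ⟨hk, by simpa using hk'⟩
    · exact hC.not_adj_getVertZMod_of_adj hxy.symm hy hx k one_pos one_le_two
        ⟨hk, by simpa using hk'⟩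
    · exact hC.not_adj_getVertZMod_add_one hy k ⟨hk, hk'⟩
  · rintro k ⟨-, hk⟩ ⟨-, hk'⟩
    exact hC.not_adj_getVertZMod_of_adj hxy hx hy k two_pos le_rfl ⟨hk, by simpa using hk'⟩
  · rintro k ⟨-, hk⟩ ⟨-, hk'⟩
    exact hC.not_adj_getVertZMod_of_adj hxy.symm hy hx k two_pos le_rfl ⟨hk, by simpa using hk'⟩

theorem IsLongestPathOff.reverse {W : List V} {x y : V} {P : G.Walk x y}
    (hP : IsLongestPathOff G W P) : IsLongestPathOff G W P.reverse :=
  ⟨hP.1.reverse, by simpa using hP.2.1, by simpa using hP.2.2⟩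

theorem IsLongestPathOff.mem_support_of_adj {W : List V} {x y w : V} {P : G.Walk x y}
    (hP : IsLongestPathOff G W P) (hxw : G.Adj x w) (hw : w ∉ W) : w ∈ P.support := by
  by_contra h
  have := hP.2.2 _ _ (cons hxw.symm P) (hP.1.cons h) (by simpa [hw] using hP.2.1)
  simp at this

theorem IsLongestPathOff.degree_le {W : List V} {x y : V} {P : G.Walk x y}
    [Fintype (G.neighborSet x)] (hP : IsLongestPathOff G W P) :
    G.degree x ≤ (nbrsOn G W x).ncard + P.length := by
  classical
  have hnbrs : nbrsOn G W x = ↑({w ∈ W.toFinset | G.Adj x w}) := by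
    ext w
    simp [nbrsOn]
  have hsub :
      G.neighborFinset x ⊆ {w ∈ W.toFinset | G.Adj x w} ∪ P.support.toFinset.erase x := by
    intro w hw
    rw [mem_neighborFinset] at hw
    by_cases hwW : w ∈ W
    · exact mem_union_left _ (by simp [hwW, hw])
    · exact mem_union_right _ (by simp [hw.ne', hP.mem_support_of_adj hw hwW])
  rw [hnbrs, Set.ncard_coe_finset, ← card_neighborFinset_eq_degree]
  have := (card_le_card hsub).trans (card_union_le _ _)
  have := card_erase_of_mem (List.mem_toFinset.2 P.start_mem_support)
  have := P.support.toFinset_card_le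
  simp only [length_support] at *
  omega

theorem lemma1_pbar_one_general {V : Type*} [Fintype V]
    (G : SimpleGraph V) [DecidableRel G.Adj] {v x y : V}
    (C : G.Walk v v) (P : G.Walk x y)
    (hC : IsLongestCycle G C) (hP : IsLongestPathOff G C.support P)
    (hp : P.length = 1)
    (hx : 2 ≤ (nbrsOn G C.support x).ncard) (hy : 2 ≤ (nbrsOn G C.support y).ncard)
    (hne : nbrsOn G C.support x ≠ nbrsOn G C.support y) :
    3 * G.minDegree +
      max ((nbrsOn G C.support x \ nbrsOn G C.support y).ncard)
          ((nbrsOn G C.support y \ nbrsOn G C.support x).ncard) - 1 ≤ C.length ∧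
    3 * G.minDegree ≤ C.length := by
  classical
  have hδx := (G.minDegree_le_degree x).trans hP.degree_le
  have hδy := (G.minDegree_le_degree y).trans hP.reverse.degree_le
  rw [length_reverse] at hδy
  have := hC.three_mul_min_ncard_nbrsOn_add_max_le (adj_of_length_eq_one hp)
    (hP.2.1 x P.start_mem_support) (hP.2.1 y P.end_mem_support)
    (Set.nonempty_of_ncard_ne_zero (by omega)) (Set.nonempty_of_ncard_ne_zero (by omega)) hne
  omega

/-- **Lemma 1, case `p̄ = 1`.** If `C` is a longest cycle, `P = x→y` a longest path in
`G ∖ C` of length `1`, `|N_C(x)| ≥ 2`, `|N_C(y)| ≥ 2` and `N_C(x) ≠ N_C(y)`, then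
`|C| ≥ 3δ + max {σ₁, σ₂} − 1 ≥ 3δ`. -/
theorem lemma1_pbar_one {V : Type*} [Fintype V] [DecidableEq V]
    (G : SimpleGraph V) [DecidableRel G.Adj] {v x y : V}
    (C : G.Walk v v) (P : G.Walk x y)
    (hC : IsLongestCycle G C) (hP : IsLongestPathOff G C.support P)
    (hp : P.length = 1)
    (hx : 2 ≤ (nbrsOn G C.support x).ncard) (hy : 2 ≤ (nbrsOn G C.support y).ncard)
    (hne : nbrsOn G C.support x ≠ nbrsOn G C.support y) :
    3 * G.minDegree +
      max ((nbrsOn G C.support x \ nbrsOn G C.support y).ncard)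
          ((nbrsOn G C.support y \ nbrsOn G C.support x).ncard) - 1 ≤ C.length ∧
    3 * G.minDegree ≤ C.length :=
  lemma1_pbar_one_general G C P hC hP hp hx hy hne

end ToughPaper
end

section
/- Let G be a graph, C a longest cycle in G, and P = x→y a longest path in G∖C of length p̄ ≥ 0 with N_C(x) = N_C(y), |N_C(x)| ≥ 2. Let I_a, I_b be two distinct elementary segments created by N_C(x) on C. If every intermediate path between I_a and I_b is a single edge and there are exactly i such intermediate edges for some i ∈ {1,2,3}, then |I_a| + |I_b| ≥ 2p̄ + i + 5. -/
open SimpleGraph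

namespace ToughPaper

variable {V : Type*}

/-!
Positions on `C` are measured by the oriented arc length `arcLen`, and a statement such as
`d(p₁, p₂) + d(p₂, p₃) + ⋯ + d(pₖ, p₁) = |C|` says that `p₁, …, pₖ` lie on `C` in this cyclic
order. Every vertex of `N_C(x) = N_C(y)` is adjacent to both ends of `P`, so a chord `uw` with
`u`, `w` inside `I_a`, `I_b` closes, together with `P`, two cycles (one through `ξ_b` and `ξ_a`,
one through `ξ_a'` and `ξ_b'`). Since `C` is longest, `σ(uw) = d(ξ_a, u) + d(ξ_b, w)` lies
between `p̄ + 3` and `|I_a| + |I_b| - p̄ - 3`. If the `i` chords have distinct values of `σ`, these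
spread over `i` integers, which gives `|I_a| + |I_b| ≥ 2p̄ + i + 5`. Otherwise two chords with
equal `σ` are nested, and they close two further cycles whose bounds add up to
`|I_a| + |I_b| ≥ 2p̄ + 8`.
-/

section Walks

variable {G : SimpleGraph V}

/-- Along a walk whose vertices before the last are distinct, every vertex has at most one
outgoing dart; hence a path using only darts of that walk is determined by its endpoints. -/
lemma eq_of_isPath_of_darts_subset {u w a b : V} {C : G.Walk u w} (hC : C.support.dropLast.Nodup)
    {p q : G.Walk a b} (hp : p.IsPath) (hq : q.IsPath) (hpC : p.darts ⊆ C.darts)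
    (hqC : q.darts ⊆ C.darts) : p = q := by
  induction p with
  | nil => exact (Walk.eq_nil_iff_nil.2 (Walk.isPath_iff_nil.1 hq)).symm
  | cons h p ih =>
    cases q with
    | nil => exact Walk.eq_nil_iff_nil.2 (Walk.isPath_iff_nil.1 hp)
    | cons h' q =>
      have hfst : (C.darts.map (·.fst)).Nodup := C.map_fst_darts ▸ hC
      have hd := List.inj_on_of_nodup_map hfst (hpC (List.mem_cons_self ..))
        (hqC (List.mem_cons_self ..)) rfl
      simp only [Dart.mk.injEq, Prod.mk.injEq, true_and] at hd
      subst hd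
      rw [ih hp.of_cons hq.of_cons (fun d hd => hpC (by simp [hd]))
        (fun d hd => hqC (by simp [hd]))]

lemma isPath_append_cons {a b c d : V} {p : G.Walk a b} {q : G.Walk c d} (hp : p.IsPath)
    (hq : q.IsPath) (h : G.Adj b c) (hpq : p.support.Disjoint q.support) :
    (p.append (.cons h q)).IsPath := by
  rw [Walk.isPath_def, Walk.support_append, Walk.support_cons, List.tail_cons]
  exact hp.support_nodup.append hq.support_nodup hpq

lemma IsLongestCycle.length_add_length_add_two_le {v x y : V} {C : G.Walk v v} {P : G.Walk x y}
    (hC : IsLongestCycle G C) (hP : P.IsPath)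
    (hPC : ∀ z ∈ P.support, z ∉ C.support) {c d : V} {W : G.Walk c d} (hW : W.IsPath)
    (hWC : W.support ⊆ C.support) (hcd : c ≠ d) (hyc : G.Adj y c) (hdx : G.Adj d x) :
    W.length + P.length + 2 ≤ C.length := by
  have hQ : (W.append (.cons hdx P)).IsPath :=
    isPath_append_cons hW hP hdx fun z hzW hzP => hPC z hzP (hWC hzW)
  have hcyc : (Walk.cons hyc (W.append (.cons hdx P))).IsCycle := by
    refine (Walk.cons_isCycle_iff _ hyc).2 ⟨hQ, fun he => hcd ?_⟩
    have := hQ.length_eq_one_of_mem_edges (Sym2.eq_swap ▸ he)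
    rw [Walk.length_append, Walk.length_cons] at this
    exact Walk.eq_of_length_eq_zero (p := W) (by omega)
  have := hC.2 _ _ hcyc
  rw [Walk.length_cons, Walk.length_append, Walk.length_cons] at this
  omega

end Walks

section Arcs

variable [DecidableEq V] {G : SimpleGraph V} {v o a b c d z : V} {C : G.Walk v v}

/-- The walk of which `arcLen C a b` is the length and `arcSupport C a b` the support. -/
noncomputable def arc (C : G.Walk v v) (ha : a ∈ C.support) (hb : b ∈ C.support) : G.Walk a b :=
  (C.rotate a ha).takeUntil b ((C.mem_support_rotate_iff a ha).2 hb)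

lemma arcLen_eq_length_arc (ha : a ∈ C.support) (hb : b ∈ C.support) :
    arcLen C a b = (arc C ha hb).length := by
  rw [arcLen, dif_pos ⟨ha, (C.mem_support_rotate_iff a ha).2 hb⟩]
  rfl

lemma arcSupport_eq_support_arc (ha : a ∈ C.support) (hb : b ∈ C.support) :
    arcSupport C a b = (arc C ha hb).support := by
  rw [arcSupport, dif_pos ⟨ha, (C.mem_support_rotate_iff a ha).2 hb⟩]
  rfl

lemma mem_support_of_mem_arcSupport (hz : z ∈ arcSupport C a b) : z ∈ C.support := by
  unfold arcSupport at hz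
  split at hz
  · exact (C.mem_support_rotate_iff _ _).1 (Walk.support_takeUntil_subset_support _ _ hz)
  · simp at hz

lemma arcLen_self : arcLen C a a = 0 := by
  unfold arcLen
  split
  · simp
  · rfl

lemma arc_isPath (hC : C.IsCycle) (ha : a ∈ C.support) (hb : b ∈ C.support) :
    (arc C ha hb).IsPath :=
  (hC.rotate ha).isPath_takeUntil _

lemma darts_arc_subset (ha : a ∈ C.support) (hb : b ∈ C.support) :
    (arc C ha hb).darts ⊆ C.darts := fun _ hd =>
  (C.rotate_darts a ha).perm.subset (Walk.darts_takeUntil_subset_darts _ _ hd)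

lemma support_arc_subset (ha : a ∈ C.support) (hb : b ∈ C.support) :
    (arc C ha hb).support ⊆ C.support := fun _ hz =>
  (C.mem_support_rotate_iff a ha).1 (Walk.support_takeUntil_subset_support _ _ hz)

lemma arc_append_arc (hC : C.IsCycle) (ha : a ∈ C.support) (hb : b ∈ C.support)
    (hc : c ∈ C.support) (hbac : b ∈ (arc C ha hc).support) :
    (arc C ha hb).append (arc C hb hc) = arc C ha hc := by
  have htake : (arc C ha hc).takeUntil b hbac = arc C ha hb := Walk.takeUntil_takeUntil _ _ _
  have hdrop : (arc C ha hc).dropUntil b hbac = arc C hb hc :=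
    eq_of_isPath_of_darts_subset hC.nodup_dropLast_support
      ((arc_isPath hC ha hc).dropUntil hbac) (arc_isPath hC hb hc)
      (fun _ hd => darts_arc_subset ha hc (Walk.darts_dropUntil_subset_darts _ _ hd))
      (darts_arc_subset hb hc)
  rw [← htake, ← hdrop, Walk.take_spec]

lemma arc_append_arc_eq_rotate (hC : C.IsCycle) (ha : a ∈ C.support) (hb : b ∈ C.support)
    (hab : a ≠ b) : (arc C ha hb).append (arc C hb ha) = C.rotate a ha := by
  have hbR := (C.mem_support_rotate_iff a ha).2 hb
  have hR := (C.rotate a ha).take_spec hbR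
  have hdrop : (C.rotate a ha).dropUntil b hbR = arc C hb ha :=
    eq_of_isPath_of_darts_subset hC.nodup_dropLast_support
      ((hR ▸ hC.rotate ha).isPath_of_append_right (Walk.not_nil_of_ne hab))
      (arc_isPath hC hb ha)
      (fun _ hd => (C.rotate_darts a ha).perm.subset (Walk.darts_dropUntil_subset_darts _ _ hd))
      (darts_arc_subset hb ha)
  rw [← hdrop]
  exact hR

lemma arcLen_add_arcLen_of_mem (hC : C.IsCycle) (ha : a ∈ C.support) (hb : b ∈ C.support)
    (hc : c ∈ C.support) (hbac : b ∈ arcSupport C a c) :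
    arcLen C a b + arcLen C b c = arcLen C a c := by
  rw [arcSupport_eq_support_arc ha hc] at hbac
  rw [arcLen_eq_length_arc ha hb, arcLen_eq_length_arc hb hc, arcLen_eq_length_arc ha hc,
    ← arc_append_arc hC ha hb hc hbac, Walk.length_append]

lemma arcLen_add_arcLen_eq_length (hC : C.IsCycle) (ha : a ∈ C.support) (hb : b ∈ C.support)
    (hab : a ≠ b) : arcLen C a b + arcLen C b a = C.length := by
  rw [arcLen_eq_length_arc ha hb, arcLen_eq_length_arc hb ha, ← Walk.length_append,
    arc_append_arc_eq_rotate hC ha hb hab, Walk.length_rotate]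

lemma eq_of_arcLen_eq (ha : a ∈ C.support) (hb : b ∈ C.support) (hc : c ∈ C.support)
    (h : arcLen C a b = arcLen C a c) : b = c := by
  rw [arcLen_eq_length_arc ha hb, arcLen_eq_length_arc ha hc] at h
  rw [← Walk.getVert_length_takeUntil ((C.mem_support_rotate_iff a ha).2 hb),
    ← Walk.getVert_length_takeUntil ((C.mem_support_rotate_iff a ha).2 hc)]
  exact congrArg _ h

lemma arcLen_pos (ha : a ∈ C.support) (hb : b ∈ C.support) (hab : a ≠ b) :
    0 < arcLen C a b :=
  Nat.pos_of_ne_zero fun h => hab (eq_of_arcLen_eq ha ha hb (arcLen_self.trans h.symm))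

lemma arcLen_lt_length (hC : C.IsCycle) (ha : a ∈ C.support) (hb : b ∈ C.support) :
    arcLen C a b < C.length := by
  obtain rfl | hab := eq_or_ne a b
  · rw [arcLen_self]
    exact Walk.not_nil_iff_lt_length.1 hC.not_nil
  · have := arcLen_add_arcLen_eq_length hC ha hb hab
    have := arcLen_pos hb ha hab.symm
    omega

lemma mem_arcSupport_of_arcLen_le (ha : a ∈ C.support) (hb : b ∈ C.support)
    (hc : c ∈ C.support) (h : arcLen C a b ≤ arcLen C a c) : b ∈ arcSupport C a c := by
  rw [arcLen_eq_length_arc ha hb, arcLen_eq_length_arc ha hc, arc, arc] at h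
  rw [arcSupport_eq_support_arc ha hc,
    ← Walk.getVert_length_takeUntil ((C.mem_support_rotate_iff a ha).2 hb),
    ← Walk.getVert_takeUntil ((C.mem_support_rotate_iff a ha).2 hc) h]
  exact Walk.getVert_mem_support _ _

lemma arcLen_add_arcLen_of_le (hC : C.IsCycle) (ha : a ∈ C.support) (hb : b ∈ C.support)
    (hc : c ∈ C.support) (h : arcLen C a b ≤ arcLen C a c) :
    arcLen C a b + arcLen C b c = arcLen C a c :=
  arcLen_add_arcLen_of_mem hC ha hb hc (mem_arcSupport_of_arcLen_le ha hb hc h)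

lemma arcLen_add_arcLen_of_add_lt (hC : C.IsCycle) (ha : a ∈ C.support) (hb : b ∈ C.support)
    (hc : c ∈ C.support) (h : arcLen C a b + arcLen C b c < C.length) :
    arcLen C a b + arcLen C b c = arcLen C a c := by
  by_contra hne
  have hcb : arcLen C a c < arcLen C a b := by
    by_contra hle
    exact hne (arcLen_add_arcLen_of_le hC ha hb hc (not_lt.1 hle))
  have h₁ := arcLen_add_arcLen_of_le hC ha hc hb hcb.le
  have h₂ := arcLen_add_arcLen_eq_length hC hc hb (by rintro rfl; omega)
  omega

lemma arcLen_le_and_le_of_mem_arcSupport (hC : C.IsCycle) (ho : o ∈ C.support)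
    (ha : a ∈ C.support) (hb : b ∈ C.support) (hab : arcLen C o a ≤ arcLen C o b)
    (hz : z ∈ arcSupport C a b) :
    arcLen C o a ≤ arcLen C o z ∧ arcLen C o z ≤ arcLen C o b := by
  have hzC := mem_support_of_mem_arcSupport hz
  have h₁ := arcLen_add_arcLen_of_mem hC ha hzC hb hz
  have h₂ := arcLen_add_arcLen_of_le hC ho ha hb hab
  have h₃ := arcLen_add_arcLen_of_add_lt hC ho ha hzC
    (by have := arcLen_lt_length hC ho hb; omega)
  omega

lemma disjoint_arcSupport (hC : C.IsCycle) (ho : o ∈ C.support) (ha : a ∈ C.support)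
    (hb : b ∈ C.support) (hc : c ∈ C.support) (hd : d ∈ C.support)
    (hab : arcLen C o a ≤ arcLen C o b) (hbc : arcLen C o b < arcLen C o c)
    (hcd : arcLen C o c ≤ arcLen C o d) : (arcSupport C a b).Disjoint (arcSupport C c d) :=
  fun _ hz₁ hz₂ => by
    have := arcLen_le_and_le_of_mem_arcSupport hC ho ha hb hab hz₁
    have := arcLen_le_and_le_of_mem_arcSupport hC ho hc hd hcd hz₂
    omega

end Arcs

section LongestCycle

variable [DecidableEq V] {G : SimpleGraph V} {v x y : V} {C : G.Walk v v} {P : G.Walk x y}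

variable {u c w d : V}

/-- The cycle `y c ⟵ u w ⟶ d x` followed by `P`, with the arcs `u → c` and `w → d` of `C`. -/
lemma IsLongestCycle.length_add_three_le_of_chord (hC : IsLongestCycle G C) (hP : P.IsPath)
    (hPC : ∀ z ∈ P.support, z ∉ C.support) (hu : u ∈ C.support) (hc : c ∈ C.support)
    (hw : w ∈ C.support) (hd : d ∈ C.support)
    (hsum : arcLen C u c + arcLen C c w + arcLen C w d + arcLen C d u = C.length)
    (hcw : c ≠ w) (hdu : d ≠ u) (hyc : G.Adj y c) (hdx : G.Adj d x) (huw : G.Adj u w) :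
    P.length + 3 ≤ arcLen C d u + arcLen C c w := by
  have hCc := hC.1
  have := arcLen_pos hc hw hcw
  have := arcLen_pos hd hu hdu
  have h₁ := arcLen_add_arcLen_of_add_lt hCc hu hc hw (by omega)
  have h₂ := arcLen_add_arcLen_of_add_lt hCc hu hw hd (by omega)
  have hdisj := disjoint_arcSupport hCc hu hu hc hw hd (by simp [arcLen_self]) (by omega)
    (by omega)
  rw [arcSupport_eq_support_arc hu hc, arcSupport_eq_support_arc hw hd] at hdisj
  have hW := isPath_append_cons (arc_isPath hCc hu hc).reverse (arc_isPath hCc hw hd) huw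
    (by simpa only [Walk.support_reverse, List.disjoint_reverse_left] using hdisj)
  have hWC : ((arc C hu hc).reverse.append (.cons huw (arc C hw hd))).support ⊆ C.support := by
    simp only [Walk.support_append, Walk.support_cons, List.tail_cons, Walk.support_reverse,
      List.append_subset, List.reverse_subset]
    exact ⟨support_arc_subset hu hc, support_arc_subset hw hd⟩
  have := hC.length_add_length_add_two_le hP hPC hW hWC (by rintro rfl; omega) hyc hdx
  rw [Walk.length_append, Walk.length_cons, Walk.length_reverse, ← arcLen_eq_length_arc,
    ← arcLen_eq_length_arc] at this
  omega

/-- The cycle `y c ⟶ w u ⟵ d x` followed by `P`, with the arcs `c → w` and `d → u` of `C`. -/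
lemma IsLongestCycle.length_add_three_le_of_chord' (hC : IsLongestCycle G C) (hP : P.IsPath)
    (hPC : ∀ z ∈ P.support, z ∉ C.support) (hu : u ∈ C.support) (hc : c ∈ C.support)
    (hw : w ∈ C.support) (hd : d ∈ C.support)
    (hsum : arcLen C u c + arcLen C c w + arcLen C w d + arcLen C d u = C.length)
    (huc : u ≠ c) (hwd : w ≠ d) (hyc : G.Adj y c) (hdx : G.Adj d x) (huw : G.Adj u w) :
    P.length + 3 ≤ arcLen C u c + arcLen C w d := by
  have hCc := hC.1
  have := arcLen_pos hu hc huc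
  have := arcLen_pos hw hd hwd
  have h₁ := arcLen_add_arcLen_of_add_lt hCc hd hu hc (by omega)
  have h₂ := arcLen_add_arcLen_of_add_lt hCc hd hc hw (by omega)
  have hdisj := disjoint_arcSupport hCc hd hd hu hc hw (by simp [arcLen_self]) (by omega)
    (by omega)
  rw [arcSupport_eq_support_arc hd hu, arcSupport_eq_support_arc hc hw] at hdisj
  have hW := isPath_append_cons (arc_isPath hCc hc hw) (arc_isPath hCc hd hu).reverse huw.symm
    (by simpa only [Walk.support_reverse, List.disjoint_reverse_right] using hdisj.symm)
  have hWC : ((arc C hc hw).append (.cons huw.symm (arc C hd hu).reverse)).support ⊆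
      C.support := by
    simp only [Walk.support_append, Walk.support_cons, List.tail_cons, Walk.support_reverse,
      List.append_subset, List.reverse_subset]
    exact ⟨support_arc_subset hc hw, support_arc_subset hd hu⟩
  have := hC.length_add_length_add_two_le hP hPC hW hWC (by rintro rfl; simp_all [arcLen_self])
    hyc hdx
  rw [Walk.length_append, Walk.length_cons, Walk.length_reverse, ← arcLen_eq_length_arc,
    ← arcLen_eq_length_arc] at this
  omega

/-- The cycle `y e ⟶ u₁ w₁ ⟵ w₂ u₂ ⟶ s x` followed by `P`, with the arcs `e → u₁`, `w₂ → w₁`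
and `u₂ → s` of `C`. -/
lemma IsLongestCycle.length_add_four_le_of_nested_chords (hC : IsLongestCycle G C)
    (hP : P.IsPath) (hPC : ∀ z ∈ P.support, z ∉ C.support) {e u₁ u₂ s w₂ w₁ : V}
    (he : e ∈ C.support) (hu₁ : u₁ ∈ C.support) (hu₂ : u₂ ∈ C.support) (hs : s ∈ C.support)
    (hw₂ : w₂ ∈ C.support) (hw₁ : w₁ ∈ C.support)
    (hsum : arcLen C e u₁ + arcLen C u₁ u₂ + arcLen C u₂ s + arcLen C s w₂ + arcLen C w₂ w₁ +
      arcLen C w₁ e = C.length)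
    (hu : u₁ ≠ u₂) (hsw : s ≠ w₂) (hwe : w₁ ≠ e) (hye : G.Adj y e) (hsx : G.Adj s x)
    (h₁ : G.Adj u₁ w₁) (h₂ : G.Adj u₂ w₂) :
    P.length + 4 ≤ arcLen C u₁ u₂ + arcLen C s w₂ + arcLen C w₁ e := by
  have hCc := hC.1
  have := arcLen_pos hu₁ hu₂ hu
  have := arcLen_pos hs hw₂ hsw
  have := arcLen_pos hw₁ he hwe
  have c₁ := arcLen_add_arcLen_of_add_lt hCc he hu₁ hu₂ (by omega)
  have c₂ := arcLen_add_arcLen_of_add_lt hCc he hu₂ hs (by omega)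
  have c₃ := arcLen_add_arcLen_of_add_lt hCc he hs hw₂ (by omega)
  have c₄ := arcLen_add_arcLen_of_add_lt hCc he hw₂ hw₁ (by omega)
  have := arcLen_lt_length hCc he hw₁
  have hee : arcLen C e e = 0 := arcLen_self
  have d₁ := disjoint_arcSupport hCc he he hu₁ hu₂ hs (by omega) (by omega) (by omega)
  have d₂ := disjoint_arcSupport hCc he he hu₁ hw₂ hw₁ (by omega) (by omega) (by omega)
  have d₃ := disjoint_arcSupport hCc he hu₂ hs hw₂ hw₁ (by omega) (by omega) (by omega)
  rw [arcSupport_eq_support_arc he hu₁, arcSupport_eq_support_arc hu₂ hs] at d₁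
  rw [arcSupport_eq_support_arc he hu₁, arcSupport_eq_support_arc hw₂ hw₁] at d₂
  rw [arcSupport_eq_support_arc hu₂ hs, arcSupport_eq_support_arc hw₂ hw₁] at d₃
  have hinner := isPath_append_cons (arc_isPath hCc hw₂ hw₁).reverse (arc_isPath hCc hu₂ hs)
    h₂.symm (by simpa only [Walk.support_reverse, List.disjoint_reverse_left] using d₃.symm)
  have hW := isPath_append_cons (arc_isPath hCc he hu₁) hinner h₁ (by
    simp only [Walk.support_append, Walk.support_cons, List.tail_cons, Walk.support_reverse,
      List.disjoint_append_right, List.disjoint_reverse_right]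
    exact ⟨d₂, d₁⟩)
  have hWC : ((arc C he hu₁).append (.cons h₁ ((arc C hw₂ hw₁).reverse.append
      (.cons h₂.symm (arc C hu₂ hs))))).support ⊆ C.support := by
    simp only [Walk.support_append, Walk.support_cons, List.tail_cons, Walk.support_reverse,
      List.append_subset, List.reverse_subset]
    exact ⟨support_arc_subset he hu₁, support_arc_subset hw₂ hw₁, support_arc_subset hu₂ hs⟩
  have := hC.length_add_length_add_two_le hP hPC hW hWC (by rintro rfl; omega) hye hsx
  simp only [Walk.length_append, Walk.length_cons, Walk.length_reverse,
    ← arcLen_eq_length_arc] at this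
  omega

end LongestCycle

section Segments

variable [DecidableEq V] {G : SimpleGraph V} {v x y a a' b b' w : V} {C : G.Walk v v}
  {P : G.Walk x y} {N : Set V}

lemma ConsecOnC.arcLen_le (hNC : ∀ z ∈ N, z ∈ C.support) (ha : ConsecOnC C N a a')
    (hwN : w ∈ N) (hwa : w ≠ a) : arcLen C a a' ≤ arcLen C a w := by
  by_contra! hlt
  refine ha.2.2.2 w (mem_arcSupport_of_arcLen_le (hNC a ha.1) (hNC w hwN) (hNC a' ha.2.1)
    hlt.le) hwa ?_ hwN
  rintro rfl
  exact lt_irrefl _ hlt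

lemma ConsecOnC.arcLen_add_eq_length (hC : C.IsCycle) (hNC : ∀ z ∈ N, z ∈ C.support)
    (ha : ConsecOnC C N a a') (hb : ConsecOnC C N b b') (hab : a ≠ b) :
    arcLen C a a' + arcLen C a' b + arcLen C b b' + arcLen C b' a = C.length := by
  have haC := hNC a ha.1
  have ha'C := hNC a' ha.2.1
  have hbC := hNC b hb.1
  have hb'C := hNC b' hb.2.1
  have h₁ := arcLen_add_arcLen_of_le hC haC ha'C hbC (ha.arcLen_le hNC hb.1 hab.symm)
  have h₂ := arcLen_add_arcLen_of_le hC hbC hb'C haC (hb.arcLen_le hNC ha.1 hab)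
  have h₃ := arcLen_add_arcLen_eq_length hC haC hbC hab
  omega

lemma InteriorArc.arcLen_add_arcLen (hC : C.IsCycle) (ha : a ∈ C.support)
    (ha' : a' ∈ C.support) (hw : InteriorArc C a a' w) :
    0 < arcLen C a w ∧ 0 < arcLen C w a' ∧ arcLen C a w + arcLen C w a' = arcLen C a a' := by
  have hwC := mem_support_of_mem_arcSupport hw.1
  exact ⟨arcLen_pos ha hwC hw.2.1.symm, arcLen_pos hwC ha' hw.2.2,
    arcLen_add_arcLen_of_mem hC ha hwC ha' hw.1⟩

variable {u : V}

lemma arcLen_bounds_of_chord (hC : IsLongestCycle G C) (hP : P.IsPath)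
    (hPC : ∀ z ∈ P.support, z ∉ C.support) (hNC : ∀ z ∈ N, z ∈ C.support)
    (hxN : ∀ z ∈ N, G.Adj x z) (hyN : ∀ z ∈ N, G.Adj y z)
    (ha : ConsecOnC C N a a') (hb : ConsecOnC C N b b') (hab : a ≠ b)
    (hu : InteriorArc C a a' u) (hw : InteriorArc C b b' w) (huw : G.Adj u w) :
    P.length + 3 ≤ arcLen C a u + arcLen C b w ∧
      arcLen C a u + arcLen C b w + P.length + 3 ≤ arcLen C a a' + arcLen C b b' := by
  have hCc := hC.1
  have haC := hNC a ha.1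
  have ha'C := hNC a' ha.2.1
  have hbC := hNC b hb.1
  have hb'C := hNC b' hb.2.1
  have huC := mem_support_of_mem_arcSupport hu.1
  have hwC := mem_support_of_mem_arcSupport hw.1
  have hseg := ha.arcLen_add_eq_length hCc hNC hb hab
  have hu' := hu.arcLen_add_arcLen hCc haC ha'C
  have hw' := hw.arcLen_add_arcLen hCc hbC hb'C
  have m₁ := arcLen_add_arcLen_of_add_lt hCc huC ha'C hbC (by omega)
  have m₂ := arcLen_add_arcLen_of_add_lt hCc hwC hb'C haC (by omega)
  have m₃ := arcLen_add_arcLen_of_add_lt hCc ha'C hbC hwC (by omega)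
  have m₄ := arcLen_add_arcLen_of_add_lt hCc hb'C haC huC (by omega)
  have k₁ := hC.length_add_three_le_of_chord hP hPC huC hbC hwC haC (by omega) hw.2.1.symm
    hu.2.1.symm (hyN b hb.1) (hxN a ha.1).symm huw
  have k₂ := hC.length_add_three_le_of_chord' hP hPC huC ha'C hwC hb'C (by omega) hu.2.2
    hw.2.2 (hyN a' ha.2.1) (hxN b' hb.2.1).symm huw
  omega

lemma two_mul_length_add_eight_le_of_nested_chords (hC : IsLongestCycle G C) (hP : P.IsPath)
    (hPC : ∀ z ∈ P.support, z ∉ C.support) (hNC : ∀ z ∈ N, z ∈ C.support)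
    (hxN : ∀ z ∈ N, G.Adj x z) (hyN : ∀ z ∈ N, G.Adj y z)
    (ha : ConsecOnC C N a a') (hb : ConsecOnC C N b b') (hab : a ≠ b) {u₁ w₁ u₂ w₂ : V}
    (hu₁ : InteriorArc C a a' u₁) (hw₁ : InteriorArc C b b' w₁)
    (hu₂ : InteriorArc C a a' u₂) (hw₂ : InteriorArc C b b' w₂)
    (h₁ : G.Adj u₁ w₁) (h₂ : G.Adj u₂ w₂)
    (hu : arcLen C a u₁ < arcLen C a u₂) (hw : arcLen C b w₂ < arcLen C b w₁) :
    2 * P.length + 8 ≤ arcLen C a a' + arcLen C b b' := by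
  have hCc := hC.1
  have haC := hNC a ha.1
  have ha'C := hNC a' ha.2.1
  have hbC := hNC b hb.1
  have hb'C := hNC b' hb.2.1
  have hu₁C := mem_support_of_mem_arcSupport hu₁.1
  have hu₂C := mem_support_of_mem_arcSupport hu₂.1
  have hw₁C := mem_support_of_mem_arcSupport hw₁.1
  have hw₂C := mem_support_of_mem_arcSupport hw₂.1
  have hseg := ha.arcLen_add_eq_length hCc hNC hb hab
  have hu₁' := hu₁.arcLen_add_arcLen hCc haC ha'C
  have hu₂' := hu₂.arcLen_add_arcLen hCc haC ha'C
  have hw₁' := hw₁.arcLen_add_arcLen hCc hbC hb'C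
  have hw₂' := hw₂.arcLen_add_arcLen hCc hbC hb'C
  have s₁ := arcLen_add_arcLen_of_le hCc haC hu₁C hu₂C hu.le
  have s₂ := arcLen_add_arcLen_of_le hCc hbC hw₂C hw₁C hw.le
  have m₁ := arcLen_add_arcLen_of_add_lt hCc hb'C haC hu₁C (by omega)
  have m₂ := arcLen_add_arcLen_of_add_lt hCc hu₂C ha'C hbC (by omega)
  have m₃ := arcLen_add_arcLen_of_add_lt hCc ha'C hbC hw₂C (by omega)
  have m₄ := arcLen_add_arcLen_of_add_lt hCc hw₁C hb'C haC (by omega)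
  have k₁ := hC.length_add_four_le_of_nested_chords hP hPC hb'C hu₁C hu₂C hbC hw₂C hw₁C
    (by omega) (by rintro rfl; omega) hw₂.2.1.symm hw₁.2.2 (hyN b' hb.2.1)
    (hxN b hb.1).symm h₁ h₂
  have k₂ := hC.length_add_four_le_of_nested_chords hP hPC ha'C hw₂C hw₁C haC hu₁C hu₂C
    (by omega) (by rintro rfl; omega) hu₁.2.1.symm hu₂.2.2 (hyN a' ha.2.1)
    (hxN a ha.1).symm h₂.symm h₁.symm
  omega

lemma two_mul_length_add_eight_le_of_chords (hC : IsLongestCycle G C) (hP : P.IsPath)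
    (hPC : ∀ z ∈ P.support, z ∉ C.support) (hNC : ∀ z ∈ N, z ∈ C.support)
    (hxN : ∀ z ∈ N, G.Adj x z) (hyN : ∀ z ∈ N, G.Adj y z)
    (ha : ConsecOnC C N a a') (hb : ConsecOnC C N b b') (hab : a ≠ b) {u₁ w₁ u₂ w₂ : V}
    (hu₁ : InteriorArc C a a' u₁) (hw₁ : InteriorArc C b b' w₁)
    (hu₂ : InteriorArc C a a' u₂) (hw₂ : InteriorArc C b b' w₂)
    (h₁ : G.Adj u₁ w₁) (h₂ : G.Adj u₂ w₂) (hne : (u₁, w₁) ≠ (u₂, w₂))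
    (hσ : arcLen C a u₁ + arcLen C b w₁ = arcLen C a u₂ + arcLen C b w₂) :
    2 * P.length + 8 ≤ arcLen C a a' + arcLen C b b' := by
  wlog hu : arcLen C a u₁ < arcLen C a u₂ generalizing u₁ w₁ u₂ w₂
  · obtain hlt | heq := (not_lt.1 hu).lt_or_eq
    · exact this hu₂ hw₂ hu₁ hw₁ h₂ h₁ hne.symm hσ.symm hlt
    · have haC := hNC a ha.1
      have hbC := hNC b hb.1
      obtain rfl := eq_of_arcLen_eq haC (mem_support_of_mem_arcSupport hu₂.1)
        (mem_support_of_mem_arcSupport hu₁.1) heq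
      obtain rfl := eq_of_arcLen_eq hbC (mem_support_of_mem_arcSupport hw₁.1)
        (mem_support_of_mem_arcSupport hw₂.1) (by omega)
      exact absurd rfl hne
  exact two_mul_length_add_eight_le_of_nested_chords hC hP hPC hNC hxN hyN ha hb hab hu₁ hw₁
    hu₂ hw₂ h₁ h₂ hu (by omega)

end Segments

lemma exists_add_ncard_le_of_injOn {α : Type*} {S : Set α} {f : α → ℕ} {m : ℕ}
    (hS : 0 < S.ncard) (hf : Set.InjOn f S) (hm : ∀ p ∈ S, m ≤ f p) :
    ∃ p ∈ S, m + S.ncard ≤ f p + 1 := by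
  by_contra! h
  have hsub : f '' S ⊆ Set.Ico m (m + S.ncard - 1) := by
    rintro _ ⟨p, hp, rfl⟩
    exact ⟨hm p hp, by have := h p hp; omega⟩
  have := Set.ncard_le_ncard hsub (Set.finite_Ico _ _)
  rw [hf.ncard_image, Set.ncard_Ico_nat] at this
  omega

theorem lemma2_a2_general {V : Type*} [DecidableEq V]
    (G : SimpleGraph V) {v x y ξa ξa' ξb ξb' : V} (i : ℕ)
    (C : G.Walk v v) (P : G.Walk x y)
    (hC : IsLongestCycle G C) (hP : IsLongestPathOff G C.support P)
    (hN : nbrsOn G C.support x = nbrsOn G C.support y)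
    (ha : ConsecOnC C (nbrsOn G C.support x) ξa ξa')
    (hb : ConsecOnC C (nbrsOn G C.support x) ξb ξb')
    (hab : ξa ≠ ξb)
    (hi : i ∈ ({1, 2, 3} : Set ℕ))
    (hcount : {p : V × V | InteriorArc C ξa ξa' p.1 ∧ InteriorArc C ξb ξb' p.2 ∧
        G.Adj p.1 p.2}.ncard = i) :
    2 * P.length + i + 5 ≤ arcLen C ξa ξa' + arcLen C ξb ξb' := by
  obtain ⟨hPpath, hPC, -⟩ := hP
  have hNC : ∀ z ∈ nbrsOn G C.support x, z ∈ C.support := fun _ hz => hz.1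
  have hxN : ∀ z ∈ nbrsOn G C.support x, G.Adj x z := fun _ hz => hz.2
  have hyN : ∀ z ∈ nbrsOn G C.support x, G.Adj y z := fun _ hz => (hN ▸ hz).2
  have hi : 0 < i ∧ i ≤ 3 := by
    simp only [Set.mem_insert_iff, Set.mem_singleton_iff] at hi
    omega
  by_cases hinj : Set.InjOn (fun p : V × V => arcLen C ξa p.1 + arcLen C ξb p.2)
    {p : V × V | InteriorArc C ξa ξa' p.1 ∧ InteriorArc C ξb ξb' p.2 ∧ G.Adj p.1 p.2}
  · obtain ⟨p, ⟨hp₁, hp₂, hp⟩, hle⟩ := exists_add_ncard_le_of_injOn (hcount ▸ hi.1) hinj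
      fun p hp => (arcLen_bounds_of_chord hC hPpath hPC hNC hxN hyN ha hb hab hp.1 hp.2.1
        hp.2.2).1
    have := (arcLen_bounds_of_chord hC hPpath hPC hNC hxN hyN ha hb hab hp₁ hp₂ hp).2
    omega
  · simp only [Set.InjOn, not_forall] at hinj
    obtain ⟨p, ⟨hp₁, hp₂, hp⟩, q, ⟨hq₁, hq₂, hq⟩, hσ, hne⟩ := hinj
    have := two_mul_length_add_eight_le_of_chords hC hPpath hPC hNC hxN hyN ha hb hab hp₁ hp₂
      hq₁ hq₂ hp hq hne hσ
    omega

/-- **Lemma 2 (a2).** With `C` a longest cycle, `P = x→y` a longest path in `G ∖ C` of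
length `p̄ ≥ 0`, `N_C(x) = N_C(y)`, `|N_C(x)| ≥ 2`: if all intermediate paths between the
distinct elementary segments `I_a = ξ_a→ξ_a'` and `I_b = ξ_b→ξ_b'` are single edges and
there are exactly `i ∈ {1,2,3}` such intermediate edges, then `|I_a| + |I_b| ≥ 2p̄ + i + 5`. -/
theorem lemma2_a2 {V : Type*} [Fintype V] [DecidableEq V]
    (G : SimpleGraph V) {v x y ξa ξa' ξb ξb' : V} (i : ℕ)
    (C : G.Walk v v) (P : G.Walk x y)
    (hC : IsLongestCycle G C) (hP : IsLongestPathOff G C.support P)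
    (hN : nbrsOn G C.support x = nbrsOn G C.support y)
    (hcard : 2 ≤ (nbrsOn G C.support x).ncard)
    (ha : ConsecOnC C (nbrsOn G C.support x) ξa ξa')
    (hb : ConsecOnC C (nbrsOn G C.support x) ξb ξb')
    (hab : ξa ≠ ξb)
    (hedges : ∀ (z w : V) (L : G.Walk z w),
      IsInterPath G C P.support (nbrsOn G C.support x) ξa ξa' ξb ξb' L → L.length = 1)
    (hi : i ∈ ({1, 2, 3} : Set ℕ))
    (hcount : {p : V × V | InteriorArc C ξa ξa' p.1 ∧ InteriorArc C ξb ξb' p.2 ∧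
        G.Adj p.1 p.2}.ncard = i) :
    2 * P.length + i + 5 ≤ arcLen C ξa ξa' + arcLen C ξb ξb' :=
  lemma2_a2_general G i C P hC hP hN ha hb hab hi hcount

end ToughPaper
end

section
/- Let G be a graph, C a longest cycle in G, and P = x→y a longest path in G∖C of length p̄ ≥ 0 with N_C(x) = N_C(y), |N_C(x)| ≥ 2. If for two distinct elementary segments I_a, I_b all intermediate paths are edges and among them there exist two vertex-disjoint (independent) intermediate edges, then |I_a| + |I_b| ≥ 2p̄ + 8. -/
open SimpleGraph

namespace SimpleGraph.Walk

variable {V : Type*} {G : SimpleGraph V} {u v w z z' : V}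

lemma append_left_cancel {p : G.Walk u v} {q q' : G.Walk v w} (h : p.append q = p.append q') :
    q = q' :=
  darts_injective (List.append_cancel_left (by simpa only [darts_append] using congrArg darts h))

lemma IsCycle.eq_or_eq_of_mem_support_append {p : G.Walk u v} {q : G.Walk v u}
    (hc : (p.append q).IsCycle) {t : V} (hp : t ∈ p.support) (hq : t ∈ q.support) :
    t = u ∨ t = v := by
  have hnd := hc.support_nodup
  rw [tail_support_append, List.nodup_append'] at hnd
  rw [← cons_tail_support, List.mem_cons] at hp hq
  rcases hp with rfl | hp
  · exact Or.inl rfl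
  rcases hq with rfl | hq
  · exact Or.inr rfl
  exact (hnd.2.2 hp hq).elim

lemma IsPath.mem_support_interior_of_isSubwalk {p : G.Walk u v} (hp : p.IsPath) {s : G.Walk z z'}
    (hs : s.IsSubwalk p) (hz : z ≠ u) (hz' : z' ≠ v) {t : V} (ht : t ∈ s.support) :
    t ∈ p.support ∧ t ≠ u ∧ t ≠ v := by
  obtain ⟨r₁, r₂, rfl⟩ := hs
  refine ⟨by simp [ht], ?_, ?_⟩
  · rintro rfl
    rw [← append_assoc] at hp
    exact hp.ne_of_mem_support_of_append hz.symm r₁.start_mem_support (by simp [ht]) rfl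
  · rintro rfl
    exact hp.ne_of_mem_support_of_append hz'.symm (by simp [ht]) r₂.end_mem_support rfl

lemma IsPath.mem_support_interior_of_isSubwalk_or_reverse {p : G.Walk u v} (hp : p.IsPath)
    {s : G.Walk z z'} (hs : s.IsSubwalk p ∨ s.reverse.IsSubwalk p) (hz : z ≠ u ∧ z ≠ v)
    (hz' : z' ≠ u ∧ z' ≠ v) {t : V} (ht : t ∈ s.support) : t ∈ p.support ∧ t ≠ u ∧ t ≠ v := by
  rcases hs with hs | hs
  · exact hp.mem_support_interior_of_isSubwalk hs hz.1 hz'.2 ht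
  · exact hp.mem_support_interior_of_isSubwalk hs hz'.1 hz.2 (by simpa using ht)

lemma IsPath.append_cons_append_cons {s t u' : V} {Q₁ : G.Walk s u} {β : G.Walk u u'}
    {Q₃ : G.Walk u' t} (hQ : (Q₁.append (β.append Q₃)).IsPath) (huu' : u ≠ u')
    {α : G.Walk z z'} (hα : α.IsPath) (hαQ : α.support.Disjoint (Q₁.append (β.append Q₃)).support)
    (h : G.Adj u z) (h' : G.Adj z' u') :
    (Q₁.append (cons h (α.append (cons h' Q₃)))).IsPath := by
  have hQ₃ : Q₃.IsPath := hQ.of_append_right.of_append_right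
  have hQ₁₃ : Q₁.support.Disjoint Q₃.support := by
    intro t ht₁ ht₃
    by_cases htu : t = u
    · subst htu
      exact hQ.of_append_right.ne_of_mem_support_of_append huu' β.start_mem_support ht₃ rfl
    · exact hQ.ne_of_mem_support_of_append htu ht₁ (by simp [ht₃]) rfl
  rw [isPath_def, support_append, support_cons, List.tail_cons, support_append, support_cons,
    List.tail_cons, List.nodup_append', List.nodup_append']
  refine ⟨hQ.of_append_left.support_nodup, ⟨hα.support_nodup, hQ₃.support_nodup,
    fun t hα hQ₃ => hαQ hα (by simp [hQ₃])⟩, ?_⟩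
  intro t ht₁ ht
  rcases List.mem_append.1 ht with ht | ht
  · exact hαQ ht (by simp [ht₁])
  · exact hQ₁₃ ht₁ ht

variable [DecidableEq V]

lemma exists_isSubwalk_or_reverse (p : G.Walk u v) (hz : z ∈ p.support)
    (hz' : z' ∈ p.support) : ∃ s : G.Walk z z', s.IsSubwalk p ∨ s.reverse.IsSubwalk p := by
  by_cases h : z' ∈ (p.dropUntil z hz).support
  · exact ⟨_, Or.inl <|
      ((p.dropUntil z hz).isSubwalk_takeUntil h).trans (p.isSubwalk_dropUntil hz)⟩
  · have h' : z' ∈ (p.takeUntil z hz).support := by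
      rw [← p.take_spec hz, mem_support_append_iff] at hz'
      exact hz'.resolve_right h
    refine ⟨((p.takeUntil z hz).dropUntil z' h').reverse, Or.inr ?_⟩
    rw [reverse_reverse]
    exact ((p.takeUntil z hz).isSubwalk_dropUntil h').trans (p.isSubwalk_takeUntil hz)

lemma IsPath.takeUntil_of_eq_append {p : G.Walk u v} (hp : p.IsPath) {q : G.Walk v w}
    {c : G.Walk u w} (hc : c = p.append q) (h : v ∈ c.support) : c.takeUntil v h = p := by
  subst hc
  rw [takeUntil_append_of_mem_left p q p.end_mem_support]
  have hnil : (p.dropUntil v p.end_mem_support).Nil :=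
    isPath_iff_nil.mp (hp.dropUntil p.end_mem_support)
  conv_rhs => rw [← p.take_spec p.end_mem_support, hnil.eq_nil, append_nil]

lemma IsPath.rotate_of_eq_append {p : G.Walk u v} (hp : p.IsPath) {q : G.Walk v u}
    {c : G.Walk u u} (hc : c = p.append q) (h : v ∈ c.support) : c.rotate v h = q.append p := by
  have htake := hp.takeUntil_of_eq_append hc h
  have hspec : p.append (c.dropUntil v h) = p.append q := by
    calc p.append (c.dropUntil v h)
        _ = (c.takeUntil v h).append (c.dropUntil v h) := by rw [htake]
        _ = p.append q := (c.take_spec h).trans hc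
  rw [rotate, htake, append_left_cancel hspec]

lemma IsCycle.rotate_rotate {c : G.Walk u u} (hc : c.IsCycle) (hv : v ∈ c.support)
    (hw : w ∈ c.support) (hw' : w ∈ (c.rotate v hv).support) :
    (c.rotate v hv).rotate w hw' = c.rotate w hw := by
  set T := c.takeUntil v hv
  set D := c.dropUntil v hv
  have hTD : c = T.append D := (c.take_spec hv).symm
  have hDT : (D.append T).IsCycle := hc.rotate hv
  by_cases hwv : w = v
  · subst hwv
    simp [rotate]
  by_cases hwT : w ∈ T.support
  · set T₁ := T.takeUntil w hwT
    set T₂ := T.dropUntil w hwT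
    have hT : T = T₁.append T₂ := (T.take_spec hwT).symm
    have hT₁ : T₁.IsPath := (hc.isPath_takeUntil hv).takeUntil hwT
    have hDT₁ : (D.append T₁).IsPath := by
      refine IsCycle.isPath_of_append_left (q := T₂) (not_nil_of_ne hwv) ?_
      rwa [← append_assoc, ← hT]
    rw [hDT₁.rotate_of_eq_append (q := T₂) (by rw [← append_assoc, ← hT]; rfl),
      hT₁.rotate_of_eq_append (q := T₂.append D) (by rw [append_assoc, ← hT, ← hTD]),
      append_assoc]
  · have hwD : w ∈ D.support := by
      rw [hTD, mem_support_append_iff] at hw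
      exact hw.resolve_left hwT
    set D₁ := D.takeUntil w hwD
    set D₂ := D.dropUntil w hwD
    have hD : D = D₁.append D₂ := (D.take_spec hwD).symm
    have hwu : w ≠ u := fun h => hwT (h ▸ T.start_mem_support)
    have hD₁ : D₁.IsPath := by
      refine IsCycle.isPath_of_append_left (q := D₂.append T) (not_nil_of_ne hwv) ?_
      rwa [append_assoc, ← hD]
    have hTD₁ : (T.append D₁).IsPath := by
      refine IsCycle.isPath_of_append_left (q := D₂) (not_nil_of_ne hwu) ?_
      rwa [← append_assoc, ← hD, ← hTD]
    rw [hD₁.rotate_of_eq_append (q := D₂.append T) (by rw [append_assoc, ← hD]; rfl),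
      hTD₁.rotate_of_eq_append (q := D₂) (by rw [← append_assoc, ← hD, ← hTD]),
      append_assoc]

end SimpleGraph.Walk

namespace ToughPaper

open Walk

variable {V : Type*} {G : SimpleGraph V} {v x y a a' b b' : V}

/-- `x → a ⋯D⋯ b → y ⋯P⁻¹⋯ x` is a cycle. -/
lemma IsLongestCycle.length_add_length_add_two_le_s7 {C : G.Walk v v} (hC : IsLongestCycle G C)
    {P : G.Walk x y} (hP : P.IsPath) (hPC : ∀ t ∈ P.support, t ∉ C.support) (hxa : G.Adj x a)
    (hyb : G.Adj y b) (hab : a ≠ b) {D : G.Walk a b} (hD : D.IsPath)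
    (hDC : ∀ t ∈ D.support, t ∈ C.support) :
    D.length + P.length + 2 ≤ C.length := by
  have hcyc : ((cons hxa D).append (cons hyb.symm P.reverse)).IsCycle := by
    refine hD.cons (fun hx => hPC x P.start_mem_support (hDC x hx)) |>.isCycle_append
      (hP.reverse.cons fun hb => hPC b (by simpa using hb) (hDC b D.end_mem_support)) ?_ ?_
    · simp only [support_cons, List.tail_cons, support_reverse]
      exact fun t htD htP => hPC t (List.mem_reverse.1 htP) (hDC t htD)
    · have : D.length ≠ 0 := fun h => hab (eq_of_length_eq_zero h)
      left
      simp only [length_cons]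
      omega
  have := hC.2 x _ hcyc
  simp only [length_append, length_cons, length_reverse] at this
  omega

variable [DecidableEq V]

lemma exists_rotate_eq_append {C : G.Walk v v} (ha : a ∈ C.support)
    (ha' : a' ∈ C.support) :
    ∃ (A : G.Walk a a') (R : G.Walk a' a), C.rotate a ha = A.append R ∧
      arcLen C a a' = A.length ∧ arcSupport C a a' = A.support := by
  have ha'' : a' ∈ (C.rotate a ha).support := (mem_support_rotate_iff C a ha).2 ha'
  refine ⟨_, _, ((C.rotate a ha).take_spec ha'').symm, ?_, ?_⟩
  · rw [arcLen, dif_pos ⟨ha, ha''⟩]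
  · rw [arcSupport, dif_pos ⟨ha, ha''⟩]

lemma isSubwalk_of_rotate_eq_append {C : G.Walk v v} (hC : C.IsCycle) (ha : a ∈ C.support)
    (hb : b ∈ C.support) {A : G.Walk a a'} {RA : G.Walk a' a} {B : G.Walk b b'}
    {RB : G.Walk b' b} (hA : C.rotate a ha = A.append RA) (hB : C.rotate b hb = B.append RB)
    (hab : a ≠ b) (hbb' : b ≠ b') (hbA : b ∈ A.support → b = a')
    (haB : a ∈ B.support → a = b') : B.IsSubwalk RA := by
  have hbR : b ∈ RA.support := by
    have : b ∈ (A.append RA).support := hA ▸ (mem_support_rotate_iff C a ha).2 hb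
    rcases (mem_support_append_iff _ _).1 this with h | h
    · rw [hbA h]
      exact RA.start_mem_support
    · exact h
  set M := RA.takeUntil b hbR
  set S := RA.dropUntil b hbR
  have hMS : RA = M.append S := (RA.take_spec hbR).symm
  have hAMS : C.rotate a ha = (A.append M).append S := by rw [hA, hMS, append_assoc]
  have hAM : (A.append M).IsPath :=
    (hAMS ▸ hC.rotate ha).isPath_of_append_left (not_nil_of_ne hab.symm)
  have hBS : B.append RB = S.append (A.append M) := by
    rw [← hB, ← hC.rotate_rotate ha hb ((mem_support_rotate_iff C a ha).2 hb)]
    exact hAM.rotate_of_eq_append hAMS _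
  have hb'S : b' ∈ S.support := by
    have hsupp := congrArg Walk.support hBS
    rw [support_append, support_append] at hsupp
    have hpre : B.support <+: S.support ++ (A.append M).support.tail :=
      hsupp ▸ List.prefix_append _ _
    rcases List.prefix_or_prefix_of_prefix hpre (List.prefix_append _ _) with h | h
    · exact h.subset B.end_mem_support
    · rw [← haB (h.subset S.end_mem_support)]
      exact S.end_mem_support
  have hBpath : B.IsPath := (hB ▸ hC.rotate hb).isPath_of_append_left (not_nil_of_ne hbb'.symm)
  have hB' : B = S.takeUntil b' hb'S :=
    (hBpath.takeUntil_of_eq_append hBS.symm _).symm.trans (takeUntil_append_of_mem_left S _ hb'S)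
  exact hB' ▸ (S.isSubwalk_takeUntil hb'S).trans (isSubwalk_of_append_right hMS)

/-- Replacing the piece `β` of the complementary arc `R` by the detour `u → α → u'` through the
interior of `A` gives a `C`-path `a' → a`, which `P` closes to a cycle. -/
lemma length_add_four_le_of_detour {C : G.Walk v v} (hC : IsLongestCycle G C) {P : G.Walk x y}
    (hP : P.IsPath) (hPC : ∀ t ∈ P.support, t ∉ C.support) (hxa' : G.Adj x a')
    (hya : G.Adj y a) (haa' : a ≠ a') (ha : a ∈ C.support) {A : G.Walk a a'} {R : G.Walk a' a}
    (hAR : C.rotate a ha = A.append R) {u u' z z' : V} {β : G.Walk u u'}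
    (hβ : β.IsSubwalk R ∨ β.reverse.IsSubwalk R) (huu' : u ≠ u') {α : G.Walk z z'}
    (hα : α.IsSubwalk A ∨ α.reverse.IsSubwalk A) (hz : z ≠ a ∧ z ≠ a')
    (hz' : z' ≠ a ∧ z' ≠ a') (h : G.Adj u z) (h' : G.Adj z' u') :
    P.length + 4 + α.length ≤ A.length + β.length := by
  wlog hβR : β.IsSubwalk R generalizing u u' z z'
  · simpa using this (β := β.reverse) (α := α.reverse) (by simpa using hβ.symm) huu'.symm
      (by simpa using hα.symm) hz' hz h'.symm h.symm (hβ.resolve_left hβR)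
  have hcyc : (A.append R).IsCycle := hAR ▸ hC.1.rotate ha
  have hA : A.IsPath := hcyc.isPath_of_append_left (not_nil_of_ne haa'.symm)
  have hR : R.IsPath := hcyc.isPath_of_append_right (not_nil_of_ne haa')
  have hαpath : α.IsPath :=
    hα.elim (isPath_of_isSubwalk · hA) fun h => by simpa using isPath_of_isSubwalk h hA
  have hαA : ∀ t ∈ α.support, t ∈ A.support ∧ t ≠ a ∧ t ≠ a' :=
    fun _ => hA.mem_support_interior_of_isSubwalk_or_reverse hα hz hz'
  have hARC : ∀ t, t ∈ A.support ∨ t ∈ R.support → t ∈ C.support := fun t ht => by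
    rw [← mem_support_rotate_iff C a ha, hAR, mem_support_append_iff]
    exact ht
  obtain ⟨Q₁, Q₃, rfl⟩ := hβR
  rw [← append_assoc] at hR
  have hD := hR.append_cons_append_cons huu' hαpath (fun t htα htR => by
    obtain ⟨htA, hta, hta'⟩ := hαA t htα
    rw [append_assoc] at htR
    exact (hcyc.eq_or_eq_of_mem_support_append htA htR).elim hta hta') h h'
  have hlen := hC.length_add_length_add_two_le_s7 hP hPC hxa' hya haa'.symm hD (fun t ht => by
    simp only [mem_support_append_iff, support_cons, List.mem_cons] at ht
    rcases ht with ht | rfl | ht | rfl | ht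
    · exact hARC t (by simp [ht])
    · exact hARC _ (by simp)
    · exact hARC t (Or.inl (hαA t ht).1)
    · exact hARC _ (Or.inl (hαA _ α.end_mem_support).1)
    · exact hARC t (by simp [ht]))
  have hClen : C.length = A.length + ((Q₁.append β).append Q₃).length := by
    rw [← C.length_rotate a ha, hAR, length_append]
  simp only [length_append, length_cons] at hlen hClen
  omega

theorem lemma2_a3_general {V : Type*} [DecidableEq V]
    (G : SimpleGraph V) {v x y ξa ξa' ξb ξb' : V}
    (C : G.Walk v v) (P : G.Walk x y)
    (hC : IsLongestCycle G C) (hP : IsLongestPathOff G C.support P)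
    (hN : nbrsOn G C.support x = nbrsOn G C.support y)
    (ha : ConsecOnC C (nbrsOn G C.support x) ξa ξa')
    (hb : ConsecOnC C (nbrsOn G C.support x) ξb ξb')
    (hab : ξa ≠ ξb)
    (hindep : ∃ z₁ w₁ z₂ w₂ : V,
      InteriorArc C ξa ξa' z₁ ∧ InteriorArc C ξb ξb' w₁ ∧ G.Adj z₁ w₁ ∧
      InteriorArc C ξa ξa' z₂ ∧ InteriorArc C ξb ξb' w₂ ∧ G.Adj z₂ w₂ ∧
      z₁ ≠ z₂ ∧ w₁ ≠ w₂) :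
    2 * P.length + 8 ≤ arcLen C ξa ξa' + arcLen C ξb ξb' := by
  obtain ⟨z₁, w₁, z₂, w₂, hz₁, hw₁, he₁, hz₂, hw₂, he₂, hz, hw⟩ := hindep
  obtain ⟨haN, ha'N, haa', hIa⟩ := ha
  obtain ⟨hbN, hb'N, hbb', hIb⟩ := hb
  have hya : G.Adj y ξa := (hN ▸ haN : ξa ∈ nbrsOn G C.support y).2
  have hyb : G.Adj y ξb := (hN ▸ hbN : ξb ∈ nbrsOn G C.support y).2
  obtain ⟨A, RA, hA, hlenA, hsuppA⟩ := exists_rotate_eq_append haN.1 ha'N.1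
  obtain ⟨B, RB, hB, hlenB, hsuppB⟩ := exists_rotate_eq_append hbN.1 hb'N.1
  have hbA : ξb ∈ A.support → ξb = ξa' :=
    fun h => by_contra fun h' => hIa ξb (hsuppA ▸ h) hab.symm h' hbN
  have haB : ξa ∈ B.support → ξa = ξb' :=
    fun h => by_contra fun h' => hIb ξa (hsuppB ▸ h) hab h' haN
  have hBRA := isSubwalk_of_rotate_eq_append hC.1 haN.1 hbN.1 hA hB hab hbb' hbA haB
  have hARB := isSubwalk_of_rotate_eq_append hC.1 hbN.1 haN.1 hB hA hab.symm haa' haB hbA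
  obtain ⟨α, hα⟩ := A.exists_isSubwalk_or_reverse (hsuppA ▸ hz₁.1) (hsuppA ▸ hz₂.1)
  obtain ⟨β, hβ⟩ := B.exists_isSubwalk_or_reverse (hsuppB ▸ hw₁.1) (hsuppB ▸ hw₂.1)
  have I₁ := length_add_four_le_of_detour hC hP.1 hP.2.1 ha'N.2 hya haa' haN.1 hA
    (hβ.imp (·.trans hBRA) (·.trans hBRA)) hw hα hz₁.2 hz₂.2 he₁.symm he₂
  have I₂ := length_add_four_le_of_detour hC hP.1 hP.2.1 hb'N.2 hyb hbb' hbN.1 hB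
    (hα.imp (·.trans hARB) (·.trans hARB)) hz hβ hw₁.2 hw₂.2 he₁ he₂.symm
  rw [hlenA, hlenB]
  omega

/-- **Lemma 2 (a3).** With `C` a longest cycle, `P = x→y` a longest path in `G ∖ C` of
length `p̄ ≥ 0`, `N_C(x) = N_C(y)`, `|N_C(x)| ≥ 2`: if all intermediate paths between the
distinct elementary segments `I_a` and `I_b` are single edges, among which there are two
independent intermediate edges, then `|I_a| + |I_b| ≥ 2p̄ + 8`. -/
theorem lemma2_a3 {V : Type*} [Fintype V] [DecidableEq V]
    (G : SimpleGraph V) {v x y ξa ξa' ξb ξb' : V}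
    (C : G.Walk v v) (P : G.Walk x y)
    (hC : IsLongestCycle G C) (hP : IsLongestPathOff G C.support P)
    (hN : nbrsOn G C.support x = nbrsOn G C.support y)
    (hcard : 2 ≤ (nbrsOn G C.support x).ncard)
    (ha : ConsecOnC C (nbrsOn G C.support x) ξa ξa')
    (hb : ConsecOnC C (nbrsOn G C.support x) ξb ξb')
    (hab : ξa ≠ ξb)
    (hedges : ∀ (z w : V) (L : G.Walk z w),
      IsInterPath G C P.support (nbrsOn G C.support x) ξa ξa' ξb ξb' L → L.length = 1)
    (hindep : ∃ z₁ w₁ z₂ w₂ : V,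
      InteriorArc C ξa ξa' z₁ ∧ InteriorArc C ξb ξb' w₁ ∧ G.Adj z₁ w₁ ∧
      InteriorArc C ξa ξa' z₂ ∧ InteriorArc C ξb ξb' w₂ ∧ G.Adj z₂ w₂ ∧
      z₁ ≠ z₂ ∧ w₁ ≠ w₂) :
    2 * P.length + 8 ≤ arcLen C ξa ξa' + arcLen C ξb ξb' :=
  lemma2_a3_general G C P hC hP hN ha hb hab hindep

end ToughPaper
end

section
/- Let G be a graph with minimum degree δ, connectivity κ, toughness τ > 1, and longest cycle C, and let P be a longest path in G∖C of length p̄ with 2 ≤ p̄ ≤ δ − 3, endpoints x₁, x₂ and N_C(x₁) = N_C(x₂) with exactly s = δ − p̄ common neighbors on C. Then x₁x₂ ∈ E(G) (so G[V(P)] is hamiltonian), and every vertex y ∈ V(P) satisfies N_C(y) = N_C(x₁). -/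
open SimpleGraph

namespace ToughPaper

variable {V : Type*}

/-!
Write `N = N_C(x₁)` and `s = |N|`. All neighbours of `x₁` lie on `C` or on `P`, by maximality of
`P`, so `δ ≤ s + p̄` with equality only if `x₁` is adjacent to every vertex of `P`; the hypothesis
`s + p̄ = δ` gives exactly this. Rotating `P` at the edge from `x₁` to the successor of `y` turns
every `y ∈ V(P)`, `y ≠ x₂`, into the first vertex of a path `Q` on `V(P)` ending at `x₂`; `Q` is
again a longest path of `G - C`, hence `|N_C(y)| ≥ s`.

If `y` had a neighbour `u ∈ C` outside `N`, any two vertices of `N ∪ {u}` would be joined outside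
`C` through `P` or `Q` by a detour with `p̄ + 2` edges. As `C` is a longest cycle, consecutive
vertices of `N ∪ {u}` are then at distance at least `p̄ + 2` along `C`, so
`(s + 1)(p̄ + 2) ≤ |C| ≤ 2(s + p̄) + 3`, which fails for `s ≥ 3`. Hence `N_C(y) ⊆ N`, and the two
sets have the same size.
-/

theorem ncard_nbrsOn {G : SimpleGraph V} [Fintype V] [DecidableRel G.Adj] [DecidableEq V]
    (W : List V) (x : V) : (nbrsOn G W x).ncard = {w ∈ G.neighborFinset x | w ∈ W}.card := by
  rw [← Set.ncard_coe_finset]; congr 1; ext w; simp [nbrsOn, and_comm]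

theorem _root_.SimpleGraph.Walk.length_eq_of_perm_support {G : SimpleGraph V}
    {x y x' y' : V} {P : G.Walk x y} {Q : G.Walk x' y'} (h : Q.support.Perm P.support) :
    Q.length = P.length := by
  simpa only [Walk.length_support, Nat.add_right_cancel_iff] using h.length_eq

namespace IsLongestPathOff

variable {G : SimpleGraph V} {W : List V} {x y : V} {P : G.Walk x y}

theorem of_perm_support {x' y' : V} {Q : G.Walk x' y'} (hP : IsLongestPathOff G W P)
    (hQ : Q.IsPath) (hQP : Q.support.Perm P.support) : IsLongestPathOff G W Q :=
  ⟨hQ, fun u hu => hP.2.1 u (hQP.subset hu),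
    fun a b R hR hRW => Walk.length_eq_of_perm_support hQP ▸ hP.2.2 a b R hR hRW⟩

theorem mem_support_of_adj_s17 (hP : IsLongestPathOff G W P) {w : V} (hxw : G.Adj x w)
    (hw : w ∉ W) : w ∈ P.support := by
  by_contra hwP
  have hoff : ∀ u ∈ (Walk.cons hxw.symm P).support, u ∉ W := by
    simpa [Walk.support_cons, hw] using hP.2.1
  have := hP.2.2 _ _ _ (hP.1.cons hwP) hoff
  simp at this

variable [Fintype V] [DecidableRel G.Adj]

theorem neighborFinset_subset [DecidableEq V] (hP : IsLongestPathOff G W P) :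
    G.neighborFinset x ⊆ {w ∈ G.neighborFinset x | w ∈ W} ∪ P.support.toFinset.erase x := by
  intro w hw
  rw [mem_neighborFinset] at hw
  by_cases hwW : w ∈ W
  · simp [hw, hwW]
  · simp [hw.ne', hP.mem_support_of_adj_s17 hw hwW]

theorem card_union_erase_le [DecidableEq V] (hP : IsLongestPathOff G W P) :
    ({w ∈ G.neighborFinset x | w ∈ W} ∪ P.support.toFinset.erase x).card ≤
      (nbrsOn G W x).ncard + P.length := by
  have hcard : (P.support.toFinset.erase x).card = P.length := by
    rw [Finset.card_erase_of_mem (by simp), List.toFinset_card_of_nodup hP.1.support_nodup,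
      Walk.length_support, Nat.add_sub_cancel]
  rw [ncard_nbrsOn, ← hcard]
  exact Finset.card_union_le _ _

theorem minDegree_le (hP : IsLongestPathOff G W P) :
    G.minDegree ≤ (nbrsOn G W x).ncard + P.length := by
  classical
  calc G.minDegree ≤ G.degree x := G.minDegree_le_degree x
    _ = (G.neighborFinset x).card := (card_neighborFinset_eq_degree G x).symm
    _ ≤ _ := Finset.card_le_card hP.neighborFinset_subset
    _ ≤ _ := hP.card_union_erase_le

theorem adj_of_mem_support (hP : IsLongestPathOff G W P)
    (hδ : (nbrsOn G W x).ncard + P.length ≤ G.minDegree) {z : V} (hz : z ∈ P.support)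
    (hzx : z ≠ x) : G.Adj x z := by
  classical
  have heq := Finset.eq_of_subset_of_card_le hP.neighborFinset_subset <| by
    rw [card_neighborFinset_eq_degree]
    exact hP.card_union_erase_le.trans (hδ.trans (G.minDegree_le_degree x))
  rw [← mem_neighborFinset, heq]
  simp [hz, hzx]

end IsLongestPathOff

theorem _root_.SimpleGraph.Walk.IsPath.exists_isPath_perm_support {G : SimpleGraph V}
    {x w y : V} {P : G.Walk x w} (hP : P.IsPath) (hx : ∀ z ∈ P.support, z ≠ x → G.Adj x z)
    (hy : y ∈ P.support) (hyw : y ≠ w) :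
    ∃ Q : G.Walk y w, Q.IsPath ∧ Q.support.Perm P.support := by
  classical
  obtain ⟨y', hyy', R, hR⟩ := Walk.not_nil_iff.mp fun h : (P.dropUntil y hy).Nil => hyw h.eq
  have hsupp : P.support = (P.takeUntil y hy).support ++ R.support := by
    conv_lhs => rw [← P.take_spec hy, Walk.support_append, hR, Walk.support_cons, List.tail_cons]
  have hdisj := List.disjoint_of_nodup_append (hsupp ▸ hP.support_nodup)
  have hxy' : G.Adj x y' := by
    refine hx y' (by simp [hsupp]) fun h => hdisj (Walk.start_mem_support _) ?_
    rw [← h]; exact R.start_mem_support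
  have hperm : ((P.takeUntil y hy).reverse.append (Walk.cons hxy' R)).support.Perm P.support := by
    rw [Walk.support_append, Walk.support_reverse, Walk.support_cons, List.tail_cons, hsupp]
    exact (List.reverse_perm _).append_right _
  exact ⟨_, (Walk.isPath_def _).mpr (hperm.nodup_iff.mpr hP.support_nodup), hperm⟩

section CyclicLabelling

variable {G : SimpleGraph V} {v : V} {C : G.Walk v v}

-- Positions on `C` are taken in `ZMod C.length`, so that `(b - a).val` is the length of the
-- arc of `C` from position `a` forward to position `b`.
def cycleVert (C : G.Walk v v) (i : ZMod C.length) : V :=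
  C.getVert i.val

theorem cycleVert_natCast {m : ℕ} (hm : m ≤ C.length) : cycleVert C m = C.getVert m := by
  rw [cycleVert, ZMod.val_natCast]
  rcases hm.lt_or_eq with hm | rfl
  · rw [Nat.mod_eq_of_lt hm]
  · rw [Nat.mod_self, Walk.getVert_zero, Walk.getVert_length]

theorem adj_cycleVert_add_one [NeZero C.length] (i : ZMod C.length) :
    G.Adj (cycleVert C i) (cycleVert C (i + 1)) := by
  have hi := i.val_lt
  have hsucc : i + 1 = ((i.val + 1 : ℕ) : ZMod C.length) := by
    push_cast; rw [ZMod.natCast_zmod_val]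
  rw [hsucc, cycleVert_natCast hi]
  exact C.adj_getVert_succ hi

theorem mem_support_iff_exists_cycleVert [NeZero C.length] {w : V} :
    w ∈ C.support ↔ ∃ i, cycleVert C i = w := by
  refine ⟨fun hw => ?_, fun ⟨i, hi⟩ => hi ▸ C.getVert_mem_support _⟩
  obtain ⟨m, rfl, hm⟩ := Walk.mem_support_iff_exists_getVert.mp hw
  exact ⟨m, cycleVert_natCast hm⟩

theorem cycleVert_injective (hC : C.IsCycle) :
    Function.Injective (cycleVert C) := by
  have := hC.three_le_length
  have : NeZero C.length := ⟨by omega⟩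
  intro i j h
  have hi := i.val_lt
  have hj := j.val_lt
  exact ZMod.val_injective _ (hC.getVert_injOn' (by simp; omega) (by simp; omega) h)

end CyclicLabelling

section WalkAlong

variable {G : SimpleGraph V} {n : ℕ} {g : ZMod n → V}

def walkAlong (hg : ∀ i, G.Adj (g i) (g (i + 1))) (i : ZMod n) :
    (d : ℕ) → G.Walk (g i) (g (i + d))
  | 0 => Walk.nil.copy rfl (by simp)
  | d + 1 => Walk.cons (hg i) ((walkAlong hg (i + 1) d).copy rfl (by push_cast; ring_nf))

variable (hg : ∀ i, G.Adj (g i) (g (i + 1)))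

theorem length_walkAlong (i : ZMod n) (d : ℕ) : (walkAlong hg i d).length = d := by
  induction d generalizing i with
  | zero => simp [walkAlong]
  | succ d ih => simp [walkAlong, ih]

theorem support_walkAlong (i : ZMod n) (d : ℕ) :
    (walkAlong hg i d).support = (List.range (d + 1)).map fun j : ℕ => g (i + j) := by
  induction d generalizing i with
  | zero => simp [walkAlong]
  | succ d ih =>
    rw [List.range_succ_eq_map]
    simp [walkAlong, ih, Function.comp_def, add_assoc, add_comm (1 : ZMod n)]

theorem isPath_walkAlong (hinj : Function.Injective g) (i : ZMod n) {d : ℕ} (hd : d < n) :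
    (walkAlong hg i d).IsPath := by
  rw [Walk.isPath_def, support_walkAlong]
  refine List.Nodup.map_on (fun j hj k hk hjk => ?_) List.nodup_range
  simp only [List.mem_range] at hj hk
  have := congrArg ZMod.val (add_left_cancel (hinj hjk))
  rwa [ZMod.val_cast_of_lt (by omega), ZMod.val_cast_of_lt (by omega)] at this

end WalkAlong

theorem IsLongestCycle.add_two_le_val_sub {G : SimpleGraph V} {v : V} {C : G.Walk v v}
    (hC : IsLongestCycle G C) {a b : ZMod C.length} (hab : a ≠ b) {y₁ y₂ : V}
    {R : G.Walk y₁ y₂} (hR : R.IsPath) (hRC : ∀ z ∈ R.support, z ∉ C.support)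
    (h₁ : G.Adj (cycleVert C a) y₁) (h₂ : G.Adj y₂ (cycleVert C b)) :
    R.length + 2 ≤ (b - a).val := by
  have := hC.1.three_le_length
  have : NeZero C.length := ⟨by omega⟩
  have hk0 : (b - a).val ≠ 0 := by rw [Ne, ZMod.val_eq_zero]; exact sub_ne_zero.mpr hab.symm
  have hkn := (b - a).val_lt
  have hend : b + ((C.length - (b - a).val : ℕ) : ZMod C.length) = a := by
    rw [Nat.cast_sub hkn.le, ZMod.natCast_self, ZMod.natCast_zmod_val]; ring
  -- `a → R → b` followed by this arc back to `a` is a cycle of length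
  -- `R.length + 2 + (C.length - (b - a).val)`
  let arc : G.Walk (cycleVert C b) (cycleVert C a) :=
    (walkAlong adj_cycleVert_add_one b (C.length - (b - a).val)).copy rfl (congrArg _ hend)
  have harc : arc.IsPath := by
    simpa [arc] using isPath_walkAlong _ (cycleVert_injective hC.1) b (by omega)
  have harcC : ∀ z ∈ arc.support, z ∈ C.support := by
    simp [arc, support_walkAlong, mem_support_iff_exists_cycleVert]
  have hbR : cycleVert C b ∉ R.support := fun h => hRC _ h (harcC _ arc.start_mem_support)
  let T : G.Walk (cycleVert C a) (cycleVert C b) := Walk.cons h₁ (R.concat h₂)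
  have hT : T.IsPath := by
    refine (hR.concat hbR h₂).cons ?_
    rw [Walk.support_concat, List.mem_append, List.mem_singleton, not_or]
    exact ⟨fun h => hRC _ h (harcC _ arc.end_mem_support),
      (cycleVert_injective hC.1).ne hab⟩
  have hdisj : T.support.tail.Disjoint arc.support.tail := by
    have hnd := harc.support_nodup
    rw [← Walk.cons_tail_support arc, List.nodup_cons] at hnd
    simp only [T, Walk.support_cons, List.tail_cons, Walk.support_concat, List.disjoint_left,
      List.mem_append, List.mem_singleton]
    rintro z (hz | rfl) hz'
    · exact hRC z hz (harcC z (List.mem_of_mem_tail hz'))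
    · exact hnd.1 hz'
  have := hC.2 _ _ (hT.isCycle_append harc hdisj (Or.inl (by simp [T])))
  simp only [Walk.length_append, T, arc, Walk.length_cons, Walk.length_concat, Walk.length_copy,
    length_walkAlong] at this
  omega

-- The translates `s + [0, m)`, `s ∈ S`, are pairwise disjoint.
theorem card_mul_le_of_le_val_sub {n m : ℕ} [NeZero n] {S : Finset (ZMod n)}
    (hS : S.Nontrivial) (h : ∀ a ∈ S, ∀ b ∈ S, a ≠ b → m ≤ (b - a).val) : S.card * m ≤ n := by
  obtain ⟨a, ha, b, hb, hab⟩ := hS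
  have hmn : m < n := (h a ha b hb hab).trans_lt (ZMod.val_lt _)
  have hinj : Set.InjOn (fun p : ZMod n × ℕ => p.1 + p.2) ↑(S ×ˢ Finset.range m) := by
    rintro ⟨s, k⟩ hsk ⟨t, j⟩ htj hst
    simp only [Finset.coe_product, Finset.coe_range, Set.mem_prod, Finset.mem_coe,
      Set.mem_Iio] at hsk htj hst
    wlog hkj : k ≤ j generalizing s t k j
    · exact (this t j s k hst.symm htj hsk (by omega)).symm
    have hval : (s - t).val = j - k := by
      have hst' : s - t = ((j - k : ℕ) : ZMod n) := by
        push_cast [Nat.cast_sub hkj]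
        linear_combination hst
      rw [hst', ZMod.val_cast_of_lt (by omega)]
    obtain rfl : s = t := by
      by_contra hst'
      have := h t htj.1 s hsk.1 (Ne.symm hst')
      omega
    simp only [sub_self, ZMod.val_zero] at hval
    simp only [Prod.mk.injEq, true_and]
    omega
  calc S.card * m = (S ×ˢ Finset.range m).card := by simp
    _ ≤ (Finset.univ : Finset (ZMod n)).card :=
      Finset.card_le_card_of_injOn _ (fun _ _ => Finset.mem_coe.mpr (Finset.mem_univ _)) hinj
    _ = n := by simp [ZMod.card]

theorem IsLongestCycle.ncard_mul_le {G : SimpleGraph V} {v : V} {C : G.Walk v v} {ℓ : ℕ}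
    (hC : IsLongestCycle G C) {T : Set V} (hTC : ∀ w ∈ T, w ∈ C.support) (hT : T.Nontrivial)
    (hjoin : ∀ w₁ ∈ T, ∀ w₂ ∈ T, w₁ ≠ w₂ → ∃ (y₁ y₂ : V) (R : G.Walk y₁ y₂), R.IsPath ∧
      (∀ z ∈ R.support, z ∉ C.support) ∧ ℓ ≤ R.length ∧ G.Adj w₁ y₁ ∧ G.Adj y₂ w₂) :
    T.ncard * (ℓ + 2) ≤ C.length := by
  classical
  have := hC.1.three_le_length
  have : NeZero C.length := ⟨by omega⟩
  have hinj := cycleVert_injective hC.1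
  let S : Finset (ZMod C.length) := {i | cycleVert C i ∈ T}
  have hTS : T = cycleVert C '' S := by
    ext w
    refine ⟨fun hw => ?_, fun ⟨i, hi, hiw⟩ => hiw ▸ by simpa [S] using hi⟩
    obtain ⟨i, rfl⟩ := mem_support_iff_exists_cycleVert.mp (hTC w hw)
    exact ⟨i, by simpa [S] using hw, rfl⟩
  rw [hTS, Set.ncard_image_of_injective _ hinj, Set.ncard_coe_finset]
  refine card_mul_le_of_le_val_sub (Set.nontrivial_of_image _ _ (hTS ▸ hT))
    fun a ha b hb hab => ?_
  simp only [S, Finset.mem_filter, Finset.mem_univ, true_and] at ha hb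
  obtain ⟨y₁, y₂, R, hR, hRC, hℓ, h₁, h₂⟩ := hjoin _ ha _ hb (hinj.ne hab)
  have := hC.add_two_le_val_sub hab hR hRC h₁ h₂
  omega

theorem IsLongestCycle.nbrsOn_subset {G : SimpleGraph V} {v : V} {C : G.Walk v v}
    (hC : IsLongestCycle G C) {x₁ x₂ y : V} {P : G.Walk x₁ x₂} {Q : G.Walk y x₂}
    (hP : IsLongestPathOff G C.support P) (hQ : IsLongestPathOff G C.support Q)
    (hN : nbrsOn G C.support x₁ ⊆ nbrsOn G C.support x₂)
    (hN3 : 3 ≤ (nbrsOn G C.support x₁).ncard) (hP1 : 1 ≤ P.length)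
    (hshort : C.length ≤ 2 * ((nbrsOn G C.support x₁).ncard + P.length) + 3) :
    nbrsOn G C.support y ⊆ nbrsOn G C.support x₁ := by
  intro u hu
  by_contra hux
  have hfin : (nbrsOn G C.support x₁).Finite :=
    C.support.finite_toSet.subset fun w hw => hw.1
  have hlen : P.length ≤ Q.length := hQ.2.2 _ _ P hP.1 hP.2.1
  have hT := hC.ncard_mul_le (T := insert u (nbrsOn G C.support x₁)) (ℓ := P.length)
    (by rintro w (rfl | hw); exacts [hu.1, hw.1])
    ((Set.one_lt_ncard_iff_nontrivial_and_finite.mp (by omega)).1.mono (Set.subset_insert _ _))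
    (by
      rintro w₁ (rfl | hw₁) w₂ (rfl | hw₂) hne
      · exact absurd rfl hne
      · exact ⟨y, x₂, Q, hQ.1, hQ.2.1, hlen, hu.2.symm, (hN hw₂).2⟩
      · exact ⟨x₂, y, Q.reverse, hQ.1.reverse, by simpa using hQ.2.1, by simpa using hlen,
          (hN hw₁).2.symm, hu.2⟩
      · exact ⟨x₁, x₂, P, hP.1, hP.2.1, le_rfl, hw₁.2.symm, (hN hw₂).2⟩)
  rw [Set.ncard_insert_of_notMem hux hfin] at hT
  nlinarith

theorem case3_structure_general {V : Type*} [Fintype V]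
    (G : SimpleGraph V) [DecidableRel G.Adj] {v x₁ x₂ : V}
    (C : G.Walk v v) (P : G.Walk x₁ x₂)
    (hC : IsLongestCycle G C) (hshort : C.length ≤ 2 * G.minDegree + 3)
    (hP : IsLongestPathOff G C.support P)
    (hp2 : 2 ≤ P.length) (hp3 : P.length + 3 ≤ G.minDegree)
    (hN : nbrsOn G C.support x₁ = nbrsOn G C.support x₂)
    (hs : (nbrsOn G C.support x₁).ncard + P.length = G.minDegree) :
    G.Adj x₁ x₂ ∧ ∀ y ∈ P.support, nbrsOn G C.support y = nbrsOn G C.support x₁ := by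
  have hx₁ : ∀ z ∈ P.support, z ≠ x₁ → G.Adj x₁ z := fun z => hP.adj_of_mem_support hs.le
  have hx₁₂ : x₁ ≠ x₂ := by
    rintro rfl
    have := Walk.length_eq_zero_iff.mpr (Walk.isPath_iff_nil.mp hP.1)
    omega
  refine ⟨hx₁ x₂ P.end_mem_support hx₁₂.symm, fun y hy => ?_⟩
  obtain rfl | hyx₂ := eq_or_ne y x₂
  · exact hN.symm
  obtain ⟨Q, hQ, hQP⟩ := hP.1.exists_isPath_perm_support hx₁ hy hyx₂
  have hQ' := hP.of_perm_support hQ hQP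
  have hδ := hQ'.minDegree_le
  rw [Walk.length_eq_of_perm_support hQP] at hδ
  exact Set.eq_of_subset_of_ncard_le
    (hC.nbrsOn_subset hP hQ' hN.subset (by omega) (by omega) (by omega)) (by omega)
    (Set.toFinite _)

/-- **Case 3 of Theorem 1.** Let `G` have toughness `τ > 1`, `C` a longest cycle with
`|C| ≤ 2δ + 3`, and `P = x₁→x₂` a longest path in `G ∖ C` of length `p̄` with
`2 ≤ p̄ ≤ δ − 3`, `N_C(x₁) = N_C(x₂)` and exactly `s = δ − p̄` common neighbors on `C`.
Then `x₁x₂ ∈ E(G)` (so `G[V(P)]` is hamiltonian) and every `y ∈ V(P)` has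
`N_C(y) = N_C(x₁)`. -/
theorem case3_structure {V : Type*} [Fintype V] [DecidableEq V]
    (G : SimpleGraph V) [DecidableRel G.Adj] {v x₁ x₂ : V}
    (C : G.Walk v v) (P : G.Walk x₁ x₂)
    (htough : ToughGtOne G)
    (hC : IsLongestCycle G C) (hshort : C.length ≤ 2 * G.minDegree + 3)
    (hP : IsLongestPathOff G C.support P)
    (hp2 : 2 ≤ P.length) (hp3 : P.length + 3 ≤ G.minDegree)
    (hN : nbrsOn G C.support x₁ = nbrsOn G C.support x₂)
    (hs : (nbrsOn G C.support x₁).ncard + P.length = G.minDegree) :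
    G.Adj x₁ x₂ ∧ ∀ y ∈ P.support, nbrsOn G C.support y = nbrsOn G C.support x₁ :=
  case3_structure_general G C P hC hshort hP hp2 hp3 hN hs

end ToughPaper
end
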